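/- arXiv:1007.5032 — 9 statements merged into one kernel-verified Lean document; each statement's English description precedes it below -/
import Mathlib

section
/- Suppose G has inductive independence number at most ρ ≥ 1 with respect to the ordering π, and let x be a fractional LP solution of value b*. Then there exists a feasible allocation S with b(S) ≥ b*/(8·√k·ρ). (This is the existence form of the guarantee of the randomized LP-rounding algorithm, which outputs such an allocation in expectation.) -/
/-!
Split the LP value into the part carried by bundles of at most `√k` channels and the part
carried by larger bundles; one of the two is at least `b*/2`. For either part `y`, the `y`-mass
of the bundles of backward neighbours of `v` that meet a bundle `T` in the support of `y v` is
at most `√k ρ`: for small `T` by a union bound over the channels of `T`, each of backward load at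
most `ρ`; for large bundles because each of them uses more than `√k` of the `k` channels.

Now let every vertex independently draw the bundle `T` with probability `y(v,T) / (2√k ρ)`
(and `∅` otherwise), and keep its draw only if it is disjoint from the draws of all its backward
neighbours. The kept bundles are feasible, and by independence and the Weierstrass product
inequality a drawn bundle is kept with probability at least `1/2`. So the expected value is at
least the part divided by `4√k ρ`, and some outcome attains the expectation.
-/

open Finset

/-- Backward neighborhood of `v` w.r.t. the ordering `π`. -/
def BackNbhd {n : ℕ} (G : SimpleGraph (Fin n)) [DecidableRel G.Adj]
    (π : Equiv.Perm (Fin n)) (v : Fin n) : Finset (Fin n) :=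
  univ.filter fun u => G.Adj u v ∧ π u < π v

/-- `M` is an independent set of `G`. -/
def IsIndepSet {n : ℕ} (G : SimpleGraph (Fin n)) (M : Finset (Fin n)) : Prop :=
  ∀ u ∈ M, ∀ u' ∈ M, u ≠ u' → ¬ G.Adj u u'

/-- `G` has inductive independence number at most `ρ` with respect to `π`. -/
def IndIndepAtMost {n : ℕ} (G : SimpleGraph (Fin n)) [DecidableRel G.Adj]
    (π : Equiv.Perm (Fin n)) (ρ : ℝ) : Prop :=
  ∀ (v : Fin n) (M : Finset (Fin n)), IsIndepSet G M →
    ((M ∩ BackNbhd G π v).card : ℝ) ≤ ρ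

/-- `x` is a fractional LP solution. -/
def IsLPSol {n k : ℕ} (G : SimpleGraph (Fin n)) [DecidableRel G.Adj]
    (π : Equiv.Perm (Fin n)) (ρ : ℝ) (x : Fin n → Finset (Fin k) → ℝ) : Prop :=
  (∀ v T, 0 ≤ x v T) ∧
  (∀ (v : Fin n) (j : Fin k),
      ∑ u ∈ BackNbhd G π v,
        ∑ T ∈ univ.filter (fun T : Finset (Fin k) => j ∈ T), x u T ≤ ρ) ∧
  (∀ v : Fin n, ∑ T : Finset (Fin k), x v T ≤ 1)

/-- `S` is a feasible allocation: for each channel `j`, the set of vertices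
assigned channel `j` is an independent set. -/
def FeasibleAlloc {n k : ℕ} (G : SimpleGraph (Fin n)) (S : Fin n → Finset (Fin k)) : Prop :=
  ∀ (j : Fin k) (u v : Fin n), u ≠ v → j ∈ S u → j ∈ S v → ¬ G.Adj u v

theorem one_sub_sum_one_sub_le_prod {ι R : Type*} [CommRing R] [LinearOrder R]
    [IsStrictOrderedRing R] (s : Finset ι) (f : ι → R)
    (h0 : ∀ i ∈ s, 0 ≤ f i) (h1 : ∀ i ∈ s, f i ≤ 1) :
    1 - ∑ i ∈ s, (1 - f i) ≤ ∏ i ∈ s, f i := by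
  induction s using Finset.cons_induction with
  | empty => simp
  | cons a s _ ih =>
    rw [prod_cons, sum_cons]
    have ha0 := h0 a (mem_cons_self a s)
    have ha1 := h1 a (mem_cons_self a s)
    have ih' := ih (fun i hi => h0 i (mem_cons_of_mem hi)) (fun i hi => h1 i (mem_cons_of_mem hi))
    have hs : 0 ≤ ∑ i ∈ s, (1 - f i) :=
      sum_nonneg fun i hi => sub_nonneg.2 (h1 i (mem_cons_of_mem hi))
    nlinarith [mul_le_mul_of_nonneg_left ih' ha0]

theorem sum_prod_mul_prod_eq_prod_sum {ι κ R : Type*} [Fintype ι] [DecidableEq ι] [Fintype κ]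
    [CommSemiring R] (p f : ι → κ → R) (s : Finset ι) (hp : ∀ i ∉ s, ∑ t, p i t = 1) :
    ∑ ω : ι → κ, (∏ i, p i (ω i)) * ∏ i ∈ s, f i (ω i) = ∏ i ∈ s, ∑ t, p i t * f i t := by
  have hfactor : ∀ i, ∑ t, p i t * (if i ∈ s then f i t else 1)
      = if i ∈ s then ∑ t, p i t * f i t else 1 := by
    intro i
    split_ifs with hi
    · rfl
    · simpa using hp i hi
  calc ∑ ω : ι → κ, (∏ i, p i (ω i)) * ∏ i ∈ s, f i (ω i)
      = ∑ ω : ι → κ, ∏ i, p i (ω i) * (if i ∈ s then f i (ω i) else 1) := by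
        simp_rw [prod_mul_distrib, prod_ite_mem, univ_inter]
    _ = ∏ i, ∑ t, p i t * (if i ∈ s then f i t else 1) :=
        (Fintype.prod_sum fun i t => p i t * (if i ∈ s then f i t else 1)).symm
    _ = ∏ i ∈ s, ∑ t, p i t * f i t := by
        simp_rw [hfactor, prod_ite_mem, univ_inter]

theorem exists_sum_mul_le {ι R : Type*} [Fintype ι] [Nonempty ι] [CommSemiring R]
    [LinearOrder R] [IsOrderedRing R] (w f : ι → R)
    (hw0 : ∀ i, 0 ≤ w i) (hw1 : ∑ i, w i = 1) : ∃ i, ∑ j, w j * f j ≤ f i := by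
  obtain ⟨i, -, hi⟩ := exists_max_image univ f univ_nonempty
  refine ⟨i, ?_⟩
  calc ∑ j, w j * f j ≤ ∑ j, w j * f i :=
        sum_le_sum fun j _ => mul_le_mul_of_nonneg_left (hi j (mem_univ j)) (hw0 j)
    _ = f i := by rw [← sum_mul, hw1, one_mul]

theorem sum_sum_filter_mem_eq_sum_card_inter_mul {α R : Type*} [Fintype α] [DecidableEq α]
    [CommSemiring R] (T : Finset α) (f : Finset α → R) :
    ∑ j ∈ T, ∑ T' ∈ univ.filter (fun T' => j ∈ T'), f T' = ∑ T', (#(T ∩ T') : R) * f T' := by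
  simp_rw [sum_filter]
  rw [sum_comm]
  refine sum_congr rfl fun T' _ => ?_
  rw [← sum_filter, sum_const, filter_mem_eq_inter, nsmul_eq_mul]

section ScaledDist

variable {α : Type*} [Fintype α] [DecidableEq α]

def scaledDist (q : ℝ) (y : Finset α → ℝ) (T : Finset α) : ℝ :=
  q * y T + if T = ∅ then 1 - q * ∑ T', y T' else 0

variable {q : ℝ} {y : Finset α → ℝ}

theorem sum_scaledDist : ∑ T, scaledDist q y T = 1 := by
  simp only [scaledDist, sum_add_distrib, ← mul_sum, sum_ite_eq', mem_univ, if_true]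
  ring

theorem le_scaledDist (hqy : q * ∑ T, y T ≤ 1) (T : Finset α) : q * y T ≤ scaledDist q y T := by
  unfold scaledDist
  split_ifs <;> linarith

theorem scaledDist_nonneg (hq : 0 ≤ q) (hy : ∀ T, 0 ≤ y T) (hqy : q * ∑ T, y T ≤ 1)
    (T : Finset α) : 0 ≤ scaledDist q y T :=
  (mul_nonneg hq (hy T)).trans (le_scaledDist hqy T)

theorem sum_filter_disjoint_scaledDist (T : Finset α) :
    ∑ T' ∈ univ.filter (fun T' => Disjoint T' T), scaledDist q y T'
      = 1 - q * ∑ T' ∈ univ.filter (fun T' => ¬ Disjoint T' T), y T' := by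
  have hnonempty : ∀ T' ∈ univ.filter (fun T' => ¬ Disjoint T' T),
      scaledDist q y T' = q * y T' := by
    intro T' hT'
    have hT'ne : T' ≠ ∅ := by
      rintro rfl
      exact (mem_filter.1 hT').2 (disjoint_empty_left T)
    simp [scaledDist, hT'ne]
  rw [mul_sum, ← sum_congr rfl hnonempty, ← sum_scaledDist (q := q) (y := y),
    ← sum_filter_add_sum_filter_not univ (fun T' => Disjoint T' T)]
  ring

theorem one_sub_mul_sum_le_prod_sum_disjoint_scaledDist {ι : Type*} (hq : 0 ≤ q)
    (y : ι → Finset α → ℝ) (hy : ∀ u T, 0 ≤ y u T) (hqy : ∀ u, q * ∑ T, y u T ≤ 1)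
    (s : Finset ι) (T : Finset α) :
    1 - q * ∑ u ∈ s, ∑ T' ∈ univ.filter (fun T' => ¬ Disjoint T' T), y u T'
      ≤ ∏ u ∈ s, ∑ T' ∈ univ.filter (fun T' => Disjoint T' T), scaledDist q (y u) T' := by
  have hweier := one_sub_sum_one_sub_le_prod s
    (fun u => ∑ T' ∈ univ.filter (fun T' => Disjoint T' T), scaledDist q (y u) T')
    (fun u _ => sum_nonneg fun T' _ => scaledDist_nonneg hq (hy u) (hqy u) T')
    (fun u _ => (sum_le_sum_of_subset_of_nonneg (filter_subset _ _)
      fun T' _ _ => scaledDist_nonneg hq (hy u) (hqy u) T').trans_eq sum_scaledDist)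
  simpa only [sum_filter_disjoint_scaledDist, sub_sub_cancel, mul_sum] using hweier

end ScaledDist

section Rounding

variable {n k : ℕ} (G : SimpleGraph (Fin n)) [DecidableRel G.Adj] (π : Equiv.Perm (Fin n))

theorem mem_backNbhd {u v : Fin n} : u ∈ BackNbhd G π v ↔ G.Adj u v ∧ π u < π v := by
  simp [BackNbhd]

theorem notMem_backNbhd_self (v : Fin n) : v ∉ BackNbhd G π v := fun h =>
  G.irrefl ((mem_backNbhd G π).1 h).1

def backwardConflict (y : Fin n → Finset (Fin k) → ℝ) (v : Fin n) (T : Finset (Fin k)) : ℝ :=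
  ∑ u ∈ BackNbhd G π v, ∑ T' ∈ univ.filter (fun T' => ¬ Disjoint T' T), y u T'

def survivors (ω : Fin n → Finset (Fin k)) (v : Fin n) : Finset (Fin k) :=
  if ∀ u ∈ BackNbhd G π v, Disjoint (ω u) (ω v) then ω v else ∅

theorem feasibleAlloc_survivors (ω : Fin n → Finset (Fin k)) :
    FeasibleAlloc G (survivors G π ω) := by
  intro j u v huv hju hjv hadj
  unfold survivors at hju hjv
  split_ifs at hju hjv with hu hv <;> try exact notMem_empty j ‹_›
  rcases lt_or_gt_of_ne (π.injective.ne huv) with h | h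
  · exact disjoint_left.1 (hv u ((mem_backNbhd G π).2 ⟨hadj, h⟩)) hju hjv
  · exact disjoint_left.1 (hu v ((mem_backNbhd G π).2 ⟨hadj.symm, h⟩)) hjv hju

theorem sum_mul_indicator_le_survivors (b : Finset (Fin k) → ℝ) (hb : ∀ T, 0 ≤ b T)
    (ω : Fin n → Finset (Fin k)) (v : Fin n) :
    ∑ T, b T * ((if ω v = T then 1 else 0) *
        ∏ u ∈ BackNbhd G π v, if Disjoint (ω u) T then 1 else 0) ≤ b (survivors G π ω v) := by
  simp_rw [← mul_assoc, mul_ite, mul_one, mul_zero, ite_mul, zero_mul, sum_ite_eq,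
    mem_univ, if_true, prod_boole]
  unfold survivors
  split_ifs with h
  · rw [mul_one]
  · rw [mul_zero]
    exact hb ∅

theorem sum_prod_mul_indicator_eq (p : Fin n → Finset (Fin k) → ℝ) (hp : ∀ i, ∑ T, p i T = 1)
    (v : Fin n) (T : Finset (Fin k)) :
    ∑ ω : Fin n → Finset (Fin k), (∏ i, p i (ω i)) * ((if ω v = T then 1 else 0) *
        ∏ u ∈ BackNbhd G π v, if Disjoint (ω u) T then 1 else 0)
      = p v T * ∏ u ∈ BackNbhd G π v,
          ∑ T' ∈ univ.filter (fun T' => Disjoint T' T), p u T' := by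
  -- The indicator is a product of one factor per coordinate in `insert v (BackNbhd G π v)`.
  set test : Fin n → Finset (Fin k) → ℝ := fun i t =>
    if i = v then (if t = T then 1 else 0) else if Disjoint t T then 1 else 0
  have hv := notMem_backNbhd_self G π v
  have hΓ : ∀ u ∈ BackNbhd G π v, test u = fun t => if Disjoint t T then 1 else 0 :=
    fun u hu => funext fun t => if_neg (ne_of_mem_of_not_mem hu hv)
  have hsplit : ∀ ω : Fin n → Finset (Fin k), ∏ i ∈ insert v (BackNbhd G π v), test i (ω i)
      = (if ω v = T then 1 else 0) * ∏ u ∈ BackNbhd G π v, if Disjoint (ω u) T then 1 else 0 := by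
    intro ω
    rw [prod_insert hv, prod_congr rfl fun u hu => congrFun (hΓ u hu) (ω u)]
    simp [test]
  simp_rw [← hsplit]
  rw [sum_prod_mul_prod_eq_prod_sum p test _ fun i _ => hp i, prod_insert hv,
    prod_congr rfl fun u hu => by rw [hΓ u hu]]
  simp [test, sum_filter]

theorem sum_mul_survivalProb_le (p : Fin n → Finset (Fin k) → ℝ) (hp0 : ∀ i T, 0 ≤ p i T)
    (hp1 : ∀ i, ∑ T, p i T = 1) (b : Finset (Fin k) → ℝ) (hb : ∀ T, 0 ≤ b T) (v : Fin n) :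
    ∑ T, b T * (p v T * ∏ u ∈ BackNbhd G π v,
        ∑ T' ∈ univ.filter (fun T' => Disjoint T' T), p u T')
      ≤ ∑ ω : Fin n → Finset (Fin k), (∏ i, p i (ω i)) * b (survivors G π ω v) := by
  simp_rw [← sum_prod_mul_indicator_eq G π p hp1 v, mul_sum]
  rw [sum_comm]
  refine sum_le_sum fun ω _ => ?_
  simp_rw [mul_left_comm (b _) (∏ i, p i (ω i)), ← mul_sum]
  exact mul_le_mul_of_nonneg_left (sum_mul_indicator_le_survivors G π b hb ω v)
    (prod_nonneg fun i _ => hp0 i (ω i))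

theorem exists_sum_mul_survivalProb_le_survivors (p : Fin n → Finset (Fin k) → ℝ)
    (hp0 : ∀ i T, 0 ≤ p i T) (hp1 : ∀ i, ∑ T, p i T = 1)
    (b : Fin n → Finset (Fin k) → ℝ) (hb : ∀ v T, 0 ≤ b v T) :
    ∃ ω : Fin n → Finset (Fin k), ∑ v, ∑ T, b v T * (p v T * ∏ u ∈ BackNbhd G π v,
        ∑ T' ∈ univ.filter (fun T' => Disjoint T' T), p u T') ≤ ∑ v, b v (survivors G π ω v) := by
  obtain ⟨ω, hω⟩ := exists_sum_mul_le (fun ω => ∏ i, p i (ω i))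
    (fun ω => ∑ v, b v (survivors G π ω v)) (fun ω => prod_nonneg fun i _ => hp0 i (ω i))
    (by rw [← Fintype.prod_sum]; simp [hp1])
  refine ⟨ω, le_trans ?_ hω⟩
  calc _ ≤ ∑ v, ∑ ω : Fin n → Finset (Fin k), (∏ i, p i (ω i)) * b v (survivors G π ω v) :=
        sum_le_sum fun v _ => sum_mul_survivalProb_le G π p hp0 hp1 (b v) (hb v) v
    _ = ∑ ω : Fin n → Finset (Fin k), (∏ i, p i (ω i)) * ∑ v, b v (survivors G π ω v) := by
        simp_rw [mul_sum]
        exact sum_comm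

theorem exists_feasibleAlloc_of_backwardConflict_le {c : ℝ} (hc : 1 ≤ 2 * c)
    (b : Fin n → Finset (Fin k) → ℝ) (hb : ∀ v T, 0 ≤ b v T)
    (y : Fin n → Finset (Fin k) → ℝ) (hy0 : ∀ v T, 0 ≤ y v T) (hy1 : ∀ v, ∑ T, y v T ≤ 1)
    (hconf : ∀ v T, y v T ≠ 0 → backwardConflict G π y v T ≤ c) :
    ∃ S, FeasibleAlloc G S ∧ (∑ v, ∑ T, b v T * y v T) / (4 * c) ≤ ∑ v, b v (S v) := by
  have hc0 : 0 < c := by linarith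
  set q := 1 / (2 * c)
  have hq0 : 0 ≤ q := by positivity
  have hqc : q * c = 1 / 2 := by simp only [q]; field_simp
  have hqy : ∀ v, q * ∑ T, y v T ≤ 1 := fun v =>
    calc q * ∑ T, y v T ≤ q * 1 := mul_le_mul_of_nonneg_left (hy1 v) hq0
      _ ≤ 1 := by rw [mul_one, div_le_one (by linarith)]; exact hc
  set p := fun v => scaledDist q (y v)
  have hp0 : ∀ v T, 0 ≤ p v T := fun v => scaledDist_nonneg hq0 (hy0 v) (hqy v)
  have hsurvive : ∀ v T, q * y v T * (1 / 2) ≤ p v T * ∏ u ∈ BackNbhd G π v,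
      ∑ T' ∈ univ.filter (fun T' => Disjoint T' T), p u T' := by
    intro v T
    by_cases hyT : y v T = 0
    · rw [hyT, mul_zero, zero_mul]
      exact mul_nonneg (hp0 v T) (prod_nonneg fun u _ => sum_nonneg fun T' _ => hp0 u T')
    have hhalf : 1 / 2 ≤ 1 - q * backwardConflict G π y v T := by
      linarith [mul_le_mul_of_nonneg_left (hconf v T hyT) hq0]
    exact mul_le_mul (le_scaledDist (hqy v) T)
      (hhalf.trans (one_sub_mul_sum_le_prod_sum_disjoint_scaledDist hq0 y hy0 hqy _ T))
      (by norm_num) (hp0 v T)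
  obtain ⟨ω, hω⟩ := exists_sum_mul_survivalProb_le_survivors G π p hp0
    (fun v => sum_scaledDist) b hb
  refine ⟨survivors G π ω, feasibleAlloc_survivors G π ω, le_trans ?_ hω⟩
  calc (∑ v, ∑ T, b v T * y v T) / (4 * c)
      = ∑ v, ∑ T, b v T * (q * y v T * (1 / 2)) := by
        simp only [sum_div, q]
        congr! 2 with v _ T _
        field_simp
        ring
    _ ≤ _ := sum_le_sum fun v _ => sum_le_sum fun T _ =>
          mul_le_mul_of_nonneg_left (hsurvive v T) (hb v T)

end Rounding

section LPBounds

variable {n k : ℕ} {G : SimpleGraph (Fin n)} [DecidableRel G.Adj] {π : Equiv.Perm (Fin n)}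
  {ρ : ℝ} {x : Fin n → Finset (Fin k) → ℝ}

theorem IsLPSol.sum_backNbhd_card_inter_mul_le (hx : IsLPSol G π ρ x) (v : Fin n)
    (T : Finset (Fin k)) :
    ∑ u ∈ BackNbhd G π v, ∑ T', (#(T ∩ T') : ℝ) * x u T' ≤ #T * ρ :=
  calc ∑ u ∈ BackNbhd G π v, ∑ T', (#(T ∩ T') : ℝ) * x u T'
      = ∑ j ∈ T, ∑ u ∈ BackNbhd G π v,
          ∑ T' ∈ univ.filter (fun T' => j ∈ T'), x u T' := by
        simp_rw [← sum_sum_filter_mem_eq_sum_card_inter_mul]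
        exact sum_comm
    _ ≤ ∑ _j ∈ T, ρ := sum_le_sum fun j _ => hx.2.1 v j
    _ = #T * ρ := by rw [sum_const, nsmul_eq_mul]

theorem IsLPSol.backwardConflict_le_card_mul (hx : IsLPSol G π ρ x)
    {y : Fin n → Finset (Fin k) → ℝ} (hy : ∀ u T, y u T ≤ x u T) (v : Fin n)
    (T : Finset (Fin k)) : backwardConflict G π y v T ≤ #T * ρ := by
  refine le_trans (sum_le_sum fun u _ => ?_) (hx.sum_backNbhd_card_inter_mul_le v T)
  calc ∑ T' ∈ univ.filter (fun T' => ¬ Disjoint T' T), y u T'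
      ≤ ∑ T' ∈ univ.filter (fun T' => ¬ Disjoint T' T), (#(T ∩ T') : ℝ) * x u T' := by
        refine sum_le_sum fun T' hT' => (hy u T').trans (le_mul_of_one_le_left (hx.1 u T') ?_)
        have hmeet : (T ∩ T').Nonempty :=
          not_disjoint_iff_nonempty_inter.1 fun h => (mem_filter.1 hT').2 h.symm
        exact_mod_cast card_pos.2 hmeet
    _ ≤ ∑ T', (#(T ∩ T') : ℝ) * x u T' :=
        sum_le_sum_of_subset_of_nonneg (filter_subset _ _)
          fun T' _ _ => mul_nonneg (Nat.cast_nonneg _) (hx.1 u T')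

theorem IsLPSol.backwardConflict_le_div (hx : IsLPSol G π ρ x) {s : ℝ} (hs : 0 < s)
    {y : Fin n → Finset (Fin k) → ℝ} (hy0 : ∀ u T, 0 ≤ y u T)
    (hy : ∀ u T, s * y u T ≤ #T * x u T) (v : Fin n) (T : Finset (Fin k)) :
    backwardConflict G π y v T ≤ k * ρ / s := by
  rw [le_div_iff₀' hs]
  calc s * backwardConflict G π y v T
      = ∑ u ∈ BackNbhd G π v, ∑ T' ∈ univ.filter (fun T' => ¬ Disjoint T' T), s * y u T' := by
        simp only [backwardConflict, mul_sum]
    _ ≤ ∑ u ∈ BackNbhd G π v, ∑ T', (#(univ ∩ T') : ℝ) * x u T' := by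
        refine sum_le_sum fun u _ => ?_
        refine (sum_le_sum_of_subset_of_nonneg (filter_subset _ _)
          fun T' _ _ => mul_nonneg hs.le (hy0 u T')).trans (sum_le_sum fun T' _ => ?_)
        rw [univ_inter]
        exact hy u T'
    _ ≤ #(univ : Finset (Fin k)) * ρ := hx.sum_backNbhd_card_inter_mul_le v univ
    _ = k * ρ := by rw [card_univ, Fintype.card_fin]

end LPBounds

section SizeClasses

variable {n k : ℕ} {G : SimpleGraph (Fin n)} [DecidableRel G.Adj] {π : Equiv.Perm (Fin n)}
  {ρ : ℝ} {x : Fin n → Finset (Fin k) → ℝ}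

theorem one_le_two_mul_sqrt_mul (hk : 1 ≤ k) (hρ : 1 ≤ ρ) : 1 ≤ 2 * (√k * ρ) := by
  have hs : 1 ≤ √(k : ℝ) := Real.one_le_sqrt.2 (by exact_mod_cast hk)
  nlinarith

theorem IsLPSol.exists_feasibleAlloc_of_card_le_sqrt (hx : IsLPSol G π ρ x) (hk : 1 ≤ k)
    (hρ : 1 ≤ ρ) (b : Fin n → Finset (Fin k) → ℝ) (hb : ∀ v T, 0 ≤ b v T) :
    ∃ S, FeasibleAlloc G S ∧
      (∑ v, ∑ T, b v T * if (#T : ℝ) ≤ √k then x v T else 0) / (4 * (√k * ρ))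
        ≤ ∑ v, b v (S v) := by
  have hy : ∀ v T, 0 ≤ (if (#T : ℝ) ≤ √k then x v T else 0) ∧
      (if (#T : ℝ) ≤ √k then x v T else 0) ≤ x v T := fun v T => by
    split_ifs <;> simp [hx.1 v T]
  refine exists_feasibleAlloc_of_backwardConflict_le G π (one_le_two_mul_sqrt_mul hk hρ) b hb _
    (fun v T => (hy v T).1) (fun v => (sum_le_sum fun T _ => (hy v T).2).trans (hx.2.2 v))
    fun v T hT => ?_
  have hTs : (#T : ℝ) ≤ √k := by
    by_contra h
    simp [h] at hT
  exact (hx.backwardConflict_le_card_mul (fun u T => (hy u T).2) v T).trans (by gcongr)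

theorem IsLPSol.exists_feasibleAlloc_of_sqrt_lt_card (hx : IsLPSol G π ρ x) (hk : 1 ≤ k)
    (hρ : 1 ≤ ρ) (b : Fin n → Finset (Fin k) → ℝ) (hb : ∀ v T, 0 ≤ b v T) :
    ∃ S, FeasibleAlloc G S ∧
      (∑ v, ∑ T, b v T * if (#T : ℝ) ≤ √k then 0 else x v T) / (4 * (√k * ρ))
        ≤ ∑ v, b v (S v) := by
  have hy : ∀ v T, 0 ≤ (if (#T : ℝ) ≤ √k then 0 else x v T) ∧
      (if (#T : ℝ) ≤ √k then 0 else x v T) ≤ x v T := fun v T => by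
    split_ifs <;> simp [hx.1 v T]
  have hsize : ∀ u T, √k * (if (#T : ℝ) ≤ √k then 0 else x u T) ≤ #T * x u T := fun u T => by
    split_ifs with h
    · simpa using mul_nonneg (Nat.cast_nonneg #T) (hx.1 u T)
    · exact mul_le_mul_of_nonneg_right (not_le.1 h).le (hx.1 u T)
  have hs0 : 0 < √(k : ℝ) := Real.sqrt_pos.2 (by exact_mod_cast hk)
  have hsqrt : (k : ℝ) * ρ / √k = √k * ρ := by
    rw [eq_comm, eq_div_iff hs0.ne', mul_right_comm, Real.mul_self_sqrt (Nat.cast_nonneg k)]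
  exact exists_feasibleAlloc_of_backwardConflict_le G π (one_le_two_mul_sqrt_mul hk hρ) b hb _
    (fun v T => (hy v T).1) (fun v => (sum_le_sum fun T _ => (hy v T).2).trans (hx.2.2 v))
    fun v T _ => (hx.backwardConflict_le_div hs0 (fun u T => (hy u T).1) hsize v T).trans_eq hsqrt

end SizeClasses

theorem exists_feasible_alloc_of_lp_solution_general {n k : ℕ} (hk : 1 ≤ k)
    (G : SimpleGraph (Fin n)) [DecidableRel G.Adj]
    (π : Equiv.Perm (Fin n)) (ρ : ℝ) (hρ : 1 ≤ ρ)
    (b : Fin n → Finset (Fin k) → ℝ) (hb : ∀ v T, 0 ≤ b v T)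
    (x : Fin n → Finset (Fin k) → ℝ) (hx : IsLPSol G π ρ x) :
    ∃ S : Fin n → Finset (Fin k), FeasibleAlloc G S ∧
      (∑ v : Fin n, ∑ T : Finset (Fin k), b v T * x v T) / (8 * Real.sqrt k * ρ)
        ≤ ∑ v : Fin n, b v (S v) := by
  obtain ⟨S₁, hS₁, h₁⟩ := hx.exists_feasibleAlloc_of_card_le_sqrt hk hρ b hb
  obtain ⟨S₂, hS₂, h₂⟩ := hx.exists_feasibleAlloc_of_sqrt_lt_card hk hρ b hb
  have hsplit : ∀ v T, b v T * x v T = b v T * (if (#T : ℝ) ≤ √k then x v T else 0)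
      + b v T * (if (#T : ℝ) ≤ √k then 0 else x v T) := fun v T => by
    split_ifs <;> simp
  simp_rw [hsplit, sum_add_distrib]
  rw [show 8 * √k * ρ = 4 * (√k * ρ) * 2 by ring, ← div_div, add_div]
  rcases le_total (∑ v, b v (S₁ v)) (∑ v, b v (S₂ v)) with h | h
  · exact ⟨S₂, hS₂, by linarith⟩
  · exact ⟨S₁, hS₁, by linarith⟩

/-- rounding guarantee for unweighted conflict graphs:
there is a feasible allocation with value at least `b* / (8 √k ρ)`. -/
theorem exists_feasible_alloc_of_lp_solution {n k : ℕ} (hk : 1 ≤ k)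
    (G : SimpleGraph (Fin n)) [DecidableRel G.Adj]
    (π : Equiv.Perm (Fin n)) (ρ : ℝ) (hρ : 1 ≤ ρ)
    (hind : IndIndepAtMost G π ρ)
    (b : Fin n → Finset (Fin k) → ℝ) (hb : ∀ v T, 0 ≤ b v T)
    (hb0 : ∀ v, b v ∅ = 0)
    (x : Fin n → Finset (Fin k) → ℝ) (hx : IsLPSol G π ρ x) :
    ∃ S : Fin n → Finset (Fin k), FeasibleAlloc G S ∧
      (∑ v : Fin n, ∑ T : Finset (Fin k), b v T * x v T) / (8 * Real.sqrt k * ρ)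
        ≤ ∑ v : Fin n, b v (S v) :=
  exists_feasible_alloc_of_lp_solution_general hk G π ρ hρ b hb x hx
end

section
/- Let x be a fractional LP solution such that x(u,T) = 0 for every u ∈ V and every nonempty T ⊆ [k] with |T| < √k. Then for every vertex v ∈ V, one has ∑_{u ∈ Γπ(v)} ∑_{T' ⊆ [k], T' ≠ ∅} x(u,T') ≤ √k·ρ. (This is the deterministic estimate underlying the bound of 1/2 on the conditional probability that a vertex surviving the rounding stage is removed in the conflict-resolution stage, in the case of bundles of size at least √k.) -/
open Finset

/- Weighting every bundle `T` by `|T|` counts it once per channel it contains, so the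
`√k`-weighted bundle load of the backward neighbourhood is at most the total channel load
`∑_j ∑_{u ∈ Γπ(v)} ∑_{T ∋ j} x(u,T) ≤ kρ`, because all bundles carrying weight have `|T| ≥ √k`.
Dividing by `√k` gives the bound. -/

theorem Finset.mul_sum_le_sum_mul_of_lt_imp_eq_zero {ι R : Type*} [Semiring R] [LinearOrder R]
    [IsOrderedRing R] (s : Finset ι) (r : R) (g w : ι → R) (hw : ∀ i ∈ s, 0 ≤ w i)
    (hsmall : ∀ i ∈ s, g i < r → w i = 0) :
    r * ∑ i ∈ s, w i ≤ ∑ i ∈ s, g i * w i := by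
  rw [mul_sum]
  refine sum_le_sum fun i hi => ?_
  by_cases hgi : g i < r
  · simp [hsmall i hi hgi]
  · exact mul_le_mul_of_nonneg_right (not_lt.mp hgi) (hw i hi)

theorem Finset.sum_card_mul_eq_sum_sum_filter_mem {α R : Type*} [Fintype α] [DecidableEq α]
    [NonAssocSemiring R] (w : Finset α → R) :
    ∑ T : Finset α, (T.card : R) * w T = ∑ j : α, ∑ T ∈ univ.filter (fun T => j ∈ T), w T := by
  calc ∑ T : Finset α, (T.card : R) * w T = ∑ T : Finset α, ∑ _j ∈ T, w T := by
        simp only [sum_const, nsmul_eq_mul]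
    _ = ∑ j : α, ∑ T ∈ univ.filter (fun T => j ∈ T), w T :=
        sum_comm' fun T j => by simp

theorem Finset.mul_sum_nonempty_le_sum_sum_filter_mem {α R : Type*} [Fintype α] [DecidableEq α]
    [Semiring R] [LinearOrder R] [IsOrderedRing R] (w : Finset α → R) (r : R) (hw : ∀ T, 0 ≤ w T)
    (hsmall : ∀ T : Finset α, T.Nonempty → (T.card : R) < r → w T = 0) :
    r * ∑ T ∈ univ.filter (fun T : Finset α => T.Nonempty), w T
      ≤ ∑ j : α, ∑ T ∈ univ.filter (fun T => j ∈ T), w T := by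
  rw [← sum_card_mul_eq_sum_sum_filter_mem]
  calc r * ∑ T ∈ univ.filter (fun T : Finset α => T.Nonempty), w T
      ≤ ∑ T ∈ univ.filter (fun T : Finset α => T.Nonempty), (T.card : R) * w T :=
        mul_sum_le_sum_mul_of_lt_imp_eq_zero _ r _ w (fun T _ => hw T)
          fun T hT => hsmall T (mem_filter.mp hT).2
    _ = ∑ T : Finset α, (T.card : R) * w T :=
        sum_filter_of_ne fun T _ hT =>
          nonempty_iff_ne_empty.2 fun hempty => hT (by simp [hempty])

theorem large_bundle_conflict_estimate_general {n k : ℕ} (hk : 1 ≤ k)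
    (G : SimpleGraph (Fin n)) [DecidableRel G.Adj]
    (π : Equiv.Perm (Fin n)) (ρ : ℝ)
    (x : Fin n → Finset (Fin k) → ℝ) (hx : IsLPSol G π ρ x)
    (hzero : ∀ (u : Fin n) (T : Finset (Fin k)),
      T.Nonempty → (T.card : ℝ) < Real.sqrt k → x u T = 0)
    (v : Fin n) :
    ∑ u ∈ BackNbhd G π v,
        ∑ T' ∈ univ.filter (fun T' : Finset (Fin k) => T'.Nonempty), x u T'
      ≤ Real.sqrt k * ρ := by
  obtain ⟨hnonneg, hchannel, -⟩ := hx
  have hsqrt_pos : 0 < Real.sqrt k := Real.sqrt_pos.2 (by exact_mod_cast hk)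
  refine le_of_mul_le_mul_left ?_ hsqrt_pos
  calc Real.sqrt k * ∑ u ∈ BackNbhd G π v,
          ∑ T' ∈ univ.filter (fun T' : Finset (Fin k) => T'.Nonempty), x u T'
      ≤ ∑ u ∈ BackNbhd G π v, ∑ j : Fin k,
          ∑ T ∈ univ.filter (fun T : Finset (Fin k) => j ∈ T), x u T := by
        rw [mul_sum]
        exact sum_le_sum fun u _ =>
          mul_sum_nonempty_le_sum_sum_filter_mem _ _ (hnonneg u) (hzero u)
    _ = ∑ j : Fin k, ∑ u ∈ BackNbhd G π v,
          ∑ T ∈ univ.filter (fun T : Finset (Fin k) => j ∈ T), x u T := sum_comm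
    _ ≤ ∑ _j : Fin k, ρ := sum_le_sum fun j _ => hchannel v j
    _ = Real.sqrt k * (Real.sqrt k * ρ) := by
        rw [sum_const, card_univ, Fintype.card_fin, nsmul_eq_mul, ← mul_assoc,
          Real.mul_self_sqrt k.cast_nonneg]

/-- deterministic estimate for bundles of size at least `√k`. -/
theorem large_bundle_conflict_estimate {n k : ℕ} (hk : 1 ≤ k)
    (G : SimpleGraph (Fin n)) [DecidableRel G.Adj]
    (π : Equiv.Perm (Fin n)) (ρ : ℝ) (hρ : 1 ≤ ρ)
    (x : Fin n → Finset (Fin k) → ℝ) (hx : IsLPSol G π ρ x)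
    (hzero : ∀ (u : Fin n) (T : Finset (Fin k)),
      T.Nonempty → (T.card : ℝ) < Real.sqrt k → x u T = 0)
    (v : Fin n) :
    ∑ u ∈ BackNbhd G π v,
        ∑ T' ∈ univ.filter (fun T' : Finset (Fin k) => T'.Nonempty), x u T'
      ≤ Real.sqrt k * ρ :=
  large_bundle_conflict_estimate_general hk G π ρ x hx hzero v
end

section
/- Let S be a partly feasible allocation on the vertex set V with |V| = n ≥ 1. Then there exists a subset W ⊆ V with |W| > n/2 such that for every v ∈ W, ∑_{u ∈ W, u ≠ v, S(u) ∩ S(v) ≠ ∅} w̄(u,v) < 1. (This is the key halving step in the conflict-resolution procedure: in each iteration, more than half of the remaining vertices can be kept while satisfying the full weight condition.) -/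
open Finset

/-- Symmetrized edge weights. -/
def wbar {n : ℕ} (w : Fin n → Fin n → ℝ) (u v : Fin n) : ℝ := w u v + w v u

/-- `M` is an independent set of the edge-weighted conflict graph `w`. -/
def WIndep {n : ℕ} (w : Fin n → Fin n → ℝ) (M : Finset (Fin n)) : Prop :=
  ∀ v ∈ M, ∑ u ∈ M, w u v < 1

/-- The edge-weighted conflict graph `w` has inductive independence number at
most `ρ` with respect to the ordering `π`. -/
def WIndIndepAtMost {n : ℕ} (w : Fin n → Fin n → ℝ) (π : Equiv.Perm (Fin n))
    (ρ : ℝ) : Prop :=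
  ∀ (v : Fin n) (M : Finset (Fin n)), (∀ u ∈ M, π u < π v) → WIndep w M →
    ∑ u ∈ M, wbar w u v ≤ ρ

/-- `x` is a fractional solution of the weighted LP. -/
def WIsLPSol {n k : ℕ} (w : Fin n → Fin n → ℝ) (π : Equiv.Perm (Fin n)) (ρ : ℝ)
    (x : Fin n → Finset (Fin k) → ℝ) : Prop :=
  (∀ v T, 0 ≤ x v T) ∧
  (∀ (v : Fin n) (j : Fin k),
      ∑ u ∈ univ.filter (fun u => π u < π v),
        ∑ T ∈ univ.filter (fun T : Finset (Fin k) => j ∈ T),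
          wbar w u v * x u T ≤ ρ) ∧
  (∀ v : Fin n, ∑ T : Finset (Fin k), x v T ≤ 1)

/-- `S` is a feasible allocation: for each channel `j`, the set of vertices
assigned channel `j` is an independent set of the weighted conflict graph. -/
def WFeasibleAlloc {n k : ℕ} (w : Fin n → Fin n → ℝ)
    (S : Fin n → Finset (Fin k)) : Prop :=
  ∀ j : Fin k, WIndep w (univ.filter fun v => j ∈ S v)

/-- `S` is a partly feasible allocation. -/
def PartlyFeasible {n k : ℕ} (w : Fin n → Fin n → ℝ) (π : Equiv.Perm (Fin n))
    (S : Fin n → Finset (Fin k)) : Prop :=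
  ∀ v : Fin n,
    ∑ u ∈ univ.filter (fun u => π u < π v ∧ (S u ∩ S v).Nonempty), wbar w u v
      < 1 / 2

/-!
Scan the vertices from the last to the first in the order `π` and keep a vertex when its
conflicting weight towards the vertices kept so far (all later than it) is below `1/2`.
A kept vertex then has weight `< 1/2` towards later kept vertices by construction and `< 1/2`
towards earlier ones by partial feasibility, so `< 1` in total. For the count, every rejected
vertex sends weight `≥ 1/2` to later kept vertices, while every kept vertex receives `< 1/2` from
all earlier vertices; summing both over the rejected-kept pairs shows that fewer vertices are
rejected than kept.
-/

theorem Finset.exists_greedy_subset {ι α : Type*} [LinearOrder α] (f : ι → α)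
    (P : ι → Finset ι → Prop) (s : Finset ι) :
    ∃ W ⊆ s, ∀ v ∈ s, v ∈ W ↔ P v {u ∈ W | f v < f u} := by
  classical
  induction s using Finset.induction_on_min_value f with
  | empty => exact ⟨∅, subset_rfl, by simp⟩
  | insert a s ha hmin ih =>
    obtain ⟨W, hWs, hW⟩ := ih
    have hlater : {u ∈ W | f a < f u} = {u ∈ insert a W | f a < f u} := by
      rw [filter_insert, if_neg (lt_irrefl _)]
    have hlater_of_mem : ∀ v ∈ s, {u ∈ W | f v < f u} = {u ∈ insert a W | f v < f u} :=
      fun v hv => by rw [filter_insert, if_neg (hmin v hv).not_gt]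
    by_cases hPa : P a {u ∈ W | f a < f u}
    · refine ⟨insert a W, insert_subset_insert a hWs, ?_⟩
      rw [forall_mem_insert]
      refine ⟨iff_of_true (mem_insert_self a W) (hlater ▸ hPa), fun v hv => ?_⟩
      rw [← hlater_of_mem v hv, ← hW v hv, mem_insert,
        or_iff_right (ne_of_mem_of_not_mem hv ha)]
    · refine ⟨W, hWs.trans (subset_insert a s), ?_⟩
      rw [forall_mem_insert]
      exact ⟨iff_of_false (fun haW => ha (hWs haW)) hPa, hW⟩

theorem Finset.card_lt_card_of_double_counting {ι : Type*} {R W : Finset ι} {f g : ι → ℝ}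
    {c : ℝ} (hc : 0 < c) (hW : W.Nonempty) (hfg : ∑ v ∈ R, f v = ∑ u ∈ W, g u)
    (hf : ∀ v ∈ R, c ≤ f v) (hg : ∀ u ∈ W, g u < c) : #R < #W := by
  have hR : #R * c ≤ ∑ v ∈ R, f v := by
    simpa [nsmul_eq_mul] using R.card_nsmul_le_sum f c hf
  have hW' : ∑ u ∈ W, g u < #W * c := by
    simpa [nsmul_eq_mul] using sum_lt_sum_of_nonempty hW hg
  exact_mod_cast lt_of_mul_lt_mul_right (hR.trans_lt (hfg ▸ hW')) hc.le

section ConflictWeight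

variable {n k : ℕ} {w : Fin n → Fin n → ℝ} {π : Equiv.Perm (Fin n)}
  {S : Fin n → Finset (Fin k)}

def conflictWeight (w : Fin n → Fin n → ℝ) (S : Fin n → Finset (Fin k)) (T : Finset (Fin n))
    (v : Fin n) : ℝ :=
  ∑ u ∈ T with (S u ∩ S v).Nonempty, wbar w u v

theorem wbar_comm (w : Fin n → Fin n → ℝ) (u v : Fin n) : wbar w u v = wbar w v u :=
  add_comm _ _

theorem wbar_nonneg (hw : ∀ u v, 0 ≤ w u v) (u v : Fin n) : 0 ≤ wbar w u v :=
  add_nonneg (hw u v) (hw v u)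

theorem conflictWeight_filter (T : Finset (Fin n)) (p : Fin n → Prop) [DecidablePred p]
    (v : Fin n) :
    conflictWeight w S {u ∈ T | p u} v =
      ∑ u ∈ T with p u ∧ (S u ∩ S v).Nonempty, wbar w u v := by
  rw [conflictWeight, filter_filter]

theorem conflictWeight_mono (hw : ∀ u v, 0 ≤ w u v) {T T' : Finset (Fin n)} (h : T ⊆ T')
    (v : Fin n) : conflictWeight w S T v ≤ conflictWeight w S T' v :=
  sum_le_sum_of_subset_of_nonneg (filter_subset_filter _ h) fun u _ _ => wbar_nonneg hw u v

theorem conflictWeight_union {T T' : Finset (Fin n)} (h : Disjoint T T') (v : Fin n) :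
    conflictWeight w S (T ∪ T') v = conflictWeight w S T v + conflictWeight w S T' v := by
  rw [conflictWeight, filter_union, sum_union (disjoint_filter_filter h)]; rfl

theorem sum_conflictWeight_later_eq (R W : Finset (Fin n)) :
    ∑ v ∈ R, conflictWeight w S {u ∈ W | π v < π u} v =
      ∑ u ∈ W, conflictWeight w S {v ∈ R | π v < π u} u := by
  simp only [conflictWeight_filter, sum_filter]
  rw [sum_comm]
  refine sum_congr rfl fun u _ => sum_congr rfl fun v _ => ?_
  rw [inter_comm, wbar_comm]

theorem PartlyFeasible.conflictWeight_lt (hw : ∀ u v, 0 ≤ w u v) (hS : PartlyFeasible w π S)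
    {T : Finset (Fin n)} {v : Fin n} (hT : ∀ u ∈ T, π u < π v) :
    conflictWeight w S T v < 1 / 2 := by
  have hsub : T ⊆ ({u | π u < π v} : Finset (Fin n)) := fun u hu =>
    mem_filter.2 ⟨mem_univ u, hT u hu⟩
  calc conflictWeight w S T v ≤ conflictWeight w S ({u | π u < π v} : Finset (Fin n)) v :=
        conflictWeight_mono hw hsub v
    _ < 1 / 2 := by rw [conflictWeight_filter]; exact hS v

variable (w π S) in
def IsBackwardGreedy (W : Finset (Fin n)) : Prop :=
  ∀ v, v ∈ W ↔ conflictWeight w S {u ∈ W | π v < π u} v < 1 / 2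

variable (w π S) in
theorem exists_isBackwardGreedy : ∃ W, IsBackwardGreedy w π S W := by
  obtain ⟨W, -, hW⟩ := exists_greedy_subset π
    (fun v T => conflictWeight w S T v < 1 / 2) univ
  exact ⟨W, fun v => hW v (mem_univ v)⟩

namespace IsBackwardGreedy

variable {W : Finset (Fin n)}

theorem nonempty (hW : IsBackwardGreedy w π S W) (v : Fin n) : W.Nonempty := by
  by_contra hempty
  rw [not_nonempty_iff_eq_empty] at hempty
  have := (hW v).not.1 (by simp [hempty])
  simp [hempty, conflictWeight] at this

theorem card_compl_lt_card (hw : ∀ u v, 0 ≤ w u v) (hS : PartlyFeasible w π S)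
    (hW : IsBackwardGreedy w π S W) (hne : W.Nonempty) : #Wᶜ < #W :=
  card_lt_card_of_double_counting (by norm_num) hne (sum_conflictWeight_later_eq _ _)
    (fun v hv => not_lt.1 ((hW v).not.1 (mem_compl.1 hv)))
    (fun _ _ => hS.conflictWeight_lt hw fun _ hv => (mem_filter.1 hv).2)

theorem conflictWeight_lt_one (hw : ∀ u v, 0 ≤ w u v) (hS : PartlyFeasible w π S)
    (hW : IsBackwardGreedy w π S W) {v : Fin n} (hv : v ∈ W) :
    conflictWeight w S {u ∈ W | u ≠ v} v < 1 := by
  have hsplit : {u ∈ W | u ≠ v} = {u ∈ W | π u < π v} ∪ {u ∈ W | π v < π u} := by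
    rw [← filter_or]
    exact filter_congr fun u _ => by rw [← π.injective.ne_iff, ne_iff_lt_or_gt]
  have hdisj : Disjoint {u ∈ W | π u < π v} {u ∈ W | π v < π u} :=
    disjoint_filter_filter' _ _ fun p hlt hgt u hu => (hlt u hu).asymm (hgt u hu)
  have hearlier := hS.conflictWeight_lt hw (T := {u ∈ W | π u < π v})
    fun u hu => (mem_filter.1 hu).2
  have hlater := (hW v).1 hv
  rw [hsplit, conflictWeight_union hdisj]
  linarith

end IsBackwardGreedy

end ConflictWeight

theorem partly_feasible_halving_general {n k : ℕ} (hn : 1 ≤ n)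
    (w : Fin n → Fin n → ℝ) (hw : ∀ u v, 0 ≤ w u v)
    (π : Equiv.Perm (Fin n))
    (S : Fin n → Finset (Fin k)) (hS : PartlyFeasible w π S) :
    ∃ W : Finset (Fin n), (n : ℝ) / 2 < (W.card : ℝ) ∧
      ∀ v ∈ W,
        ∑ u ∈ W.filter (fun u => u ≠ v ∧ (S u ∩ S v).Nonempty), wbar w u v
          < 1 := by
  obtain ⟨W, hW⟩ := exists_isBackwardGreedy w π S
  refine ⟨W, ?_, fun v hv => ?_⟩
  · have hlt := hW.card_compl_lt_card hw hS (hW.nonempty ⟨0, hn⟩)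
    have hsum : #W + #Wᶜ = n := by rw [card_add_card_compl, Fintype.card_fin]
    have htwice : (n : ℝ) < 2 * #W := by exact_mod_cast (by omega : n < 2 * #W)
    linarith
  · rw [← conflictWeight_filter]
    exact hW.conflictWeight_lt_one hw hS hv

/-- the halving step: from a partly feasible allocation on `n ≥ 1`
vertices, more than half of the vertices can be kept while satisfying the full
weight condition. -/
theorem partly_feasible_halving {n k : ℕ} (hn : 1 ≤ n) (hk : 1 ≤ k)
    (w : Fin n → Fin n → ℝ) (hw : ∀ u v, 0 ≤ w u v) (hw0 : ∀ v, w v v = 0)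
    (π : Equiv.Perm (Fin n))
    (S : Fin n → Finset (Fin k)) (hS : PartlyFeasible w π S) :
    ∃ W : Finset (Fin n), (n : ℝ) / 2 < (W.card : ℝ) ∧
      ∀ v ∈ W,
        ∑ u ∈ W.filter (fun u => u ≠ v ∧ (S u ∩ S v).Nonempty), wbar w u v
          < 1 :=
  partly_feasible_halving_general hn w hw π S hS
end

section
/- Disk graphs have inductive independence number at most 5 with respect to the ordering by non-increasing radius. Precisely: let a disk graph on points p_1,...,p_n ∈ ℝ² with radii r_1,...,r_n > 0 be given, let v be a vertex, and let M be an independent set of vertices such that every u ∈ M is adjacent to v and r_u ≥ r_v for every u ∈ M. Then |M| ≤ 5. -/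
/-!
Seen from `p v`, every member `u` of `M` lies at distance at most `r u + r v` and not at `p v`
itself. If two members `u, u'` were seen at an angle of at most `π / 3`, the law of cosines
would put them at distance at most `max (dist (p u) (p v)) (dist (p u') (p v)) ≤ r u + r u'`,
contradicting independence. So the directions of the members from `p v` are pairwise more than
`π / 3` apart, and the plane has room for at most five such directions.
-/

open Finset Real InnerProductGeometry

theorem Finset.exists_card_sub_one_mul_le_sub {ι : Type*} [DecidableEq ι] {s : Finset ι}
    (hs : s.Nonempty) {f : ι → ℝ} {δ : ℝ}
    (hf : (s : Set ι).Pairwise fun i j => δ < |f i - f j|) :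
    ∃ i ∈ s, ∃ j ∈ s, (#s - 1 : ℝ) * δ ≤ f j - f i := by
  induction s using Finset.induction_on_max_value f with
  | empty => exact absurd hs Finset.not_nonempty_empty
  | insert m s hm hmax ih =>
    rcases s.eq_empty_or_nonempty with rfl | hs'
    · exact ⟨m, mem_insert_self m ∅, m, mem_insert_self m ∅, by simp⟩
    obtain ⟨i, hi, j, hj, hij⟩ := ih hs' (hf.mono (by simp))
    have hjm : δ < f m - f j := by
      have : δ < |f m - f j| := hf (by simp) (by simp [hj]) (ne_of_mem_of_not_mem hj hm).symm
      rwa [abs_of_nonneg (sub_nonneg.2 (hmax j hj))] at this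
    refine ⟨i, mem_insert_of_mem hi, m, mem_insert_self m s, ?_⟩
    rw [card_insert_of_notMem hm]
    push_cast
    linarith

theorem Real.half_le_cos_of_abs_le_pi_div_three {x : ℝ} (hx : |x| ≤ π / 3) : 1 / 2 ≤ cos x := by
  rw [← cos_pi_div_three, ← cos_abs x]
  exact cos_le_cos_of_nonneg_of_le_pi (abs_nonneg x) (by linarith [pi_pos]) hx

theorem Complex.cos_angle_eq_cos_arg_sub {z w : ℂ} (hz : z ≠ 0) (hw : w ≠ 0) :
    Real.cos (angle z w) = Real.cos (z.arg - w.arg) := by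
  rw [angle_eq_abs_arg hz hw, cos_abs, ← Real.Angle.cos_coe, arg_div_coe_angle hz hw,
    ← Real.Angle.coe_sub, Real.Angle.cos_coe]

theorem Complex.angle_le_pi_div_three_of_half_le_cos {z w : ℂ} (hz : z ≠ 0) (hw : w ≠ 0)
    (h : 1 / 2 ≤ Real.cos (z.arg - w.arg)) : angle z w ≤ π / 3 := by
  by_contra! hlt
  have := cos_lt_cos_of_nonneg_of_le_pi (by positivity) (angle_le_pi z w) hlt
  rw [cos_pi_div_three, cos_angle_eq_cos_arg_sub hz hw] at this
  linarith

/-- Pairwise angles `> π / 3` would spread the six arguments over `5 * (π / 3)` inside `(-π, π]`,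
and the two extreme ones would then be within `π / 3` of each other across the cut at `-π`. -/
theorem Complex.exists_angle_le_pi_div_three {ι : Type*} {s : Finset ι} (hs : 6 ≤ #s)
    {z : ι → ℂ} (hz : ∀ i ∈ s, z i ≠ 0) :
    ∃ i ∈ s, ∃ j ∈ s, i ≠ j ∧ angle (z i) (z j) ≤ π / 3 := by
  classical
  by_contra! h
  have hsep : (s : Set ι).Pairwise fun i j => π / 3 < |(z i).arg - (z j).arg| := by
    intro i hi j hj hij
    by_contra! hle
    exact (h i hi j hj hij).not_ge <| angle_le_pi_div_three_of_half_le_cos (hz i hi) (hz j hj)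
      (half_le_cos_of_abs_le_pi_div_three hle)
  obtain ⟨i, hi, j, hj, hspread⟩ := exists_card_sub_one_mul_le_sub (card_pos.1 (by omega)) hsep
  have hwide : 5 * (π / 3) ≤ (z j).arg - (z i).arg := by
    refine le_trans ?_ hspread
    have : (6 : ℝ) ≤ #s := by exact_mod_cast hs
    gcongr
    linarith
  have hji : j ≠ i := by
    rintro rfl
    linarith [pi_pos]
  refine (h j hj i hi hji).not_ge <| angle_le_pi_div_three_of_half_le_cos (hz j hj) (hz i hi) ?_
  rw [← Real.cos_sub_two_pi]
  apply half_le_cos_of_abs_le_pi_div_three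
  rw [abs_le]
  constructor <;> linarith [neg_pi_lt_arg (z i), arg_le_pi (z j)]

theorem exists_angle_le_pi_div_three_of_finrank_eq_two {V : Type*} [NormedAddCommGroup V]
    [InnerProductSpace ℝ V] (hV : Module.finrank ℝ V = 2) {ι : Type*} {s : Finset ι}
    (hs : 6 ≤ #s) {x : ι → V} (hx : ∀ i ∈ s, x i ≠ 0) :
    ∃ i ∈ s, ∃ j ∈ s, i ≠ j ∧ angle (x i) (x j) ≤ π / 3 := by
  have := Module.finite_of_finrank_eq_succ hV
  let e : V ≃ₗᵢ[ℝ] ℂ :=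
    (Complex.isometryOfOrthonormal ((stdOrthonormalBasis ℝ V).reindex (finCongr hV))).symm
  obtain ⟨i, hi, j, hj, hij, h⟩ :=
    Complex.exists_angle_le_pi_div_three hs (z := fun i => e (x i)) (by simpa using hx)
  exact ⟨i, hi, j, hj, hij, by rwa [← e.toLinearIsometry.angle_map]⟩

theorem norm_sub_le_of_angle_le_pi_div_three {V : Type*} [NormedAddCommGroup V]
    [InnerProductSpace ℝ V] {x y : V} {R : ℝ} (h : angle x y ≤ π / 3) (hx : ‖x‖ ≤ R)
    (hy : ‖y‖ ≤ R) : ‖x - y‖ ≤ R := by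
  have hcos : 1 / 2 ≤ cos (angle x y) :=
    half_le_cos_of_abs_le_pi_div_three (by rwa [abs_of_nonneg (angle_nonneg x y)])
  have hlaw := norm_sub_sq_eq_norm_sq_add_norm_sq_sub_two_mul_norm_mul_norm_mul_cos_angle x y
  have hxy : 0 ≤ ‖x‖ * ‖y‖ := by positivity
  nlinarith [norm_nonneg x, norm_nonneg y, norm_nonneg (x - y)]

theorem disk_graph_inductive_independence_le_five_general {n : ℕ}
    (p : Fin n → EuclideanSpace ℝ (Fin 2)) (r : Fin n → ℝ)
    (v : Fin n) (M : Finset (Fin n))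
    (hadj : ∀ u ∈ M, u ≠ v ∧ dist (p u) (p v) ≤ r u + r v)
    (hru : ∀ u ∈ M, r v ≤ r u)
    (hindep : ∀ u ∈ M, ∀ u' ∈ M, u ≠ u' → r u + r u' < dist (p u) (p u')) :
    M.card ≤ 5 := by
  by_contra! hM
  have hoff : ∀ u ∈ M, p u - p v ≠ 0 := by
    intro u hu hpu
    obtain ⟨u', hu', hne⟩ := exists_mem_ne (by omega : 1 < #M) u
    have := hindep u hu u' hu' hne.symm
    rw [sub_eq_zero.1 hpu, dist_comm] at this
    linarith [(hadj u' hu').2, hru u hu]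
  obtain ⟨i, hi, j, hj, hij, hangle⟩ :=
    exists_angle_le_pi_div_three_of_finrank_eq_two finrank_euclideanSpace_fin hM hoff
  have hclose : dist (p i) (p j) ≤ r i + r j := by
    rw [dist_eq_norm, ← sub_sub_sub_cancel_right _ _ (p v)]
    refine norm_sub_le_of_angle_le_pi_div_three hangle ?_ ?_ <;> rw [← dist_eq_norm]
    · linarith [(hadj i hi).2, hru j hj]
    · linarith [(hadj j hj).2, hru i hi]
  linarith [hindep i hi j hj hij]

/-- disk graphs have inductive independence number at most 5 with
respect to the ordering by non-increasing radius: if `M` is an independent set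
of the disk graph all of whose members are adjacent to `v` and have radius at
least `r v`, then `|M| ≤ 5`. -/
theorem disk_graph_inductive_independence_le_five {n : ℕ}
    (p : Fin n → EuclideanSpace ℝ (Fin 2)) (r : Fin n → ℝ)
    (hr : ∀ i, 0 < r i) (v : Fin n) (M : Finset (Fin n))
    (hadj : ∀ u ∈ M, u ≠ v ∧ dist (p u) (p v) ≤ r u + r v)
    (hru : ∀ u ∈ M, r v ≤ r u)
    (hindep : ∀ u ∈ M, ∀ u' ∈ M, u ≠ u' → r u + r u' < dist (p u) (p u')) :
    M.card ≤ 5 :=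
  disk_graph_inductive_independence_le_five_general p r v M hadj hru hindep
end

section
/- Let p, q₁, q₂ ∈ ℝ² and r, r₁, r₂ > 0 with r₁ ≥ r and r₂ ≥ r. If dist(p,q₁) ≤ r + r₁, dist(p,q₂) ≤ r + r₂, and the angle ∠ q₁ p q₂ is at most π/3 (60 degrees), then dist(q₁,q₂) ≤ r₁ + r₂; that is, two disks of radius at least r whose centers subtend an angle of at most 60° at p and which both intersect the disk of radius r around p must intersect each other. -/
/-!
An angle of at most 60° is never opposite the strictly longest side of a triangle, so
`dist q₁ q₂ ≤ max (dist p q₁) (dist p q₂) ≤ r + max r₁ r₂ ≤ r₁ + r₂`.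
-/

open Real

namespace EuclideanGeometry

variable {V P : Type*} [NormedAddCommGroup V] [InnerProductSpace ℝ V] [MetricSpace P]
  [NormedAddTorsor V P]

theorem dist_sq_le_of_angle_le_pi_div_three {p q₁ q₂ : P} (h : ∠ q₁ p q₂ ≤ π / 3) :
    dist q₁ q₂ ^ 2 ≤ dist q₁ p ^ 2 + dist q₂ p ^ 2 - dist q₁ p * dist q₂ p := by
  have hcos : 1 / 2 ≤ cos (∠ q₁ p q₂) := by
    rw [← cos_pi_div_three]
    exact cos_le_cos_of_nonneg_of_le_pi (angle_nonneg _ _ _) (by linarith [pi_pos]) h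
  have hprod : 0 ≤ dist q₁ p * dist q₂ p := mul_nonneg dist_nonneg dist_nonneg
  rw [sq, sq, sq, law_cos q₁ p q₂]
  nlinarith

theorem dist_le_max_of_angle_le_pi_div_three {p q₁ q₂ : P} (h : ∠ q₁ p q₂ ≤ π / 3) :
    dist q₁ q₂ ≤ max (dist p q₁) (dist p q₂) := by
  set a := dist q₁ p
  set b := dist q₂ p
  have hM : max a b = max (dist p q₁) (dist p q₂) := by rw [dist_comm p q₁, dist_comm p q₂]
  rw [← hM, ← sq_le_sq₀ dist_nonneg (le_max_of_le_left dist_nonneg)]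
  have ha : a ≤ max a b := le_max_left a b
  have hb : b ≤ max a b := le_max_right a b
  have ha₀ : 0 ≤ a := dist_nonneg
  have hb₀ : 0 ≤ b := dist_nonneg
  nlinarith [dist_sq_le_of_angle_le_pi_div_three h, mul_nonneg (sub_nonneg.2 ha) (sub_nonneg.2 hb),
    mul_le_mul_of_nonneg_left ha ha₀, mul_le_mul_of_nonneg_left hb hb₀]

end EuclideanGeometry

theorem disks_at_small_angle_intersect_general
    (p q₁ q₂ : EuclideanSpace ℝ (Fin 2)) (r r₁ r₂ : ℝ)
    (hr₁ : r ≤ r₁) (hr₂ : r ≤ r₂)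
    (h1 : dist p q₁ ≤ r + r₁) (h2 : dist p q₂ ≤ r + r₂)
    (hangle : EuclideanGeometry.angle q₁ p q₂ ≤ Real.pi / 3) :
    dist q₁ q₂ ≤ r₁ + r₂ :=
  calc dist q₁ q₂ ≤ max (dist p q₁) (dist p q₂) :=
        EuclideanGeometry.dist_le_max_of_angle_le_pi_div_three hangle
    _ ≤ r₁ + r₂ := max_le (by linarith) (by linarith)

/-- two disks of radius at least `r` whose centers subtend an
angle of at most 60° at `p` and which both intersect the disk of radius `r`
around `p` must intersect each other. -/
theorem disks_at_small_angle_intersect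
    (p q₁ q₂ : EuclideanSpace ℝ (Fin 2)) (r r₁ r₂ : ℝ)
    (hr : 0 < r) (hr₁ : r ≤ r₁) (hr₂ : r ≤ r₂)
    (h1 : dist p q₁ ≤ r + r₁) (h2 : dist p q₂ ≤ r + r₂)
    (hangle : EuclideanGeometry.angle q₁ p q₂ ≤ Real.pi / 3) :
    dist q₁ q₂ ≤ r₁ + r₂ :=
  disks_at_small_angle_intersect_general p q₁ q₂ r r₁ r₂ hr₁ hr₂ h1 h2 hangle
end

section
/- Let r > 0, a > 0, and let D be a closed disk of radius a·r in ℝ². Then the number of closed disks of radius at least r that each intersect D but pairwise do not intersect each other is at most (a+2)². Precisely: if c₀ is the center of D and c_1,...,c_m are centers of disks with radii ρ_1,...,ρ_m ≥ r such that dist(c_i,c₀) ≤ a·r + ρ_i for all i and dist(c_i,c_j) > ρ_i + ρ_j for all i ≠ j, then m ≤ (a+2)². -/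
/-!
Shrink every disk to a disk of radius exactly `r` inside it, pulled towards `c₀`: its center then
lies within `(a + 1) r` of `c₀`, so the shrunken disks are pairwise disjoint and all contained in
the disk of radius `(a + 2) r` around `c₀`. Comparing areas gives `m r² ≤ ((a + 2) r)²`.
-/

open Metric MeasureTheory Module Function

open scoped ENNReal

section Packing

variable {E : Type*} [NormedAddCommGroup E] [NormedSpace ℝ E]

theorem exists_ball_subset_ball_dist_le_of_dist_le {c x : E} {r ρ R : ℝ} (hrρ : r ≤ ρ)
    (hRr : 0 ≤ R + r) (h : dist c x ≤ R + ρ) :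
    ∃ q, ball q r ⊆ ball c ρ ∧ dist q x ≤ R + r := by
  have hcx : dist c x ≤ (R + r) + (ρ - r) := by linarith
  obtain ⟨q, hcq, hqx⟩ := exists_dist_le_le (sub_nonneg.2 hrρ) hRr hcx
  exact ⟨q, ball_subset_ball' (by rw [dist_comm]; linarith), hqx⟩

variable [FiniteDimensional ℝ E] [Nontrivial E]

theorem card_mul_pow_finrank_le_of_pairwise_disjoint_ball_subset {ι : Type*} [Fintype ι]
    {c : ι → E} {x : E} {r R : ℝ} (hr : 0 ≤ r) (hR : 0 ≤ R)
    (hdisj : Pairwise (Disjoint on fun i => ball (c i) r))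
    (hsub : ∀ i, ball (c i) r ⊆ ball x R) :
    (Fintype.card ι : ℝ) * r ^ finrank ℝ E ≤ R ^ finrank ℝ E := by
  let _ : MeasurableSpace E := borel E
  have : BorelSpace E := ⟨rfl⟩
  set μ : Measure E := Measure.addHaar
  have key : (Fintype.card ι : ℝ≥0∞) * ENNReal.ofReal (r ^ finrank ℝ E) * μ (ball 0 1) ≤
      ENNReal.ofReal (R ^ finrank ℝ E) * μ (ball 0 1) :=
    calc _ = ∑ i, μ (ball (c i) r) := by simp [Measure.addHaar_ball μ _ hr, mul_assoc]
      _ = μ (⋃ i, ball (c i) r) := by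
        rw [measure_iUnion hdisj fun _ => measurableSet_ball, tsum_fintype]
      _ ≤ μ (ball x R) := measure_mono (Set.iUnion_subset hsub)
      _ = _ := Measure.addHaar_ball μ x hR
  rwa [ENNReal.mul_le_mul_iff_left (measure_ball_pos μ 0 one_pos).ne' measure_ball_lt_top.ne,
    ← ENNReal.ofReal_natCast, ← ENNReal.ofReal_mul (by positivity),
    ENNReal.ofReal_le_ofReal_iff (by positivity)] at key

end Packing

/-- the number of pairwise disjoint closed disks of radius at
least `r` that all intersect a given closed disk of radius `a·r` is at most
`(a+2)²`. -/
theorem disjoint_disks_touching_disk_card_le {m : ℕ} (r a : ℝ)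
    (hr : 0 < r) (ha : 0 < a)
    (c₀ : EuclideanSpace ℝ (Fin 2)) (c : Fin m → EuclideanSpace ℝ (Fin 2))
    (ρ : Fin m → ℝ) (hρ : ∀ i, r ≤ ρ i)
    (hint : ∀ i, dist (c i) c₀ ≤ a * r + ρ i)
    (hdisj : ∀ i j, i ≠ j → ρ i + ρ j < dist (c i) (c j)) :
    (m : ℝ) ≤ (a + 2) ^ 2 := by
  choose q hqc hq₀ using fun i =>
    exists_ball_subset_ball_dist_le_of_dist_le (hρ i) (by positivity) (hint i)
  have hdisjq : Pairwise (Disjoint on fun i => ball (q i) r) := fun i j hij =>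
    (ball_disjoint_ball (hdisj i j hij).le).mono (hqc i) (hqc j)
  have hsub : ∀ i, ball (q i) r ⊆ ball c₀ ((a + 2) * r) := fun i =>
    ball_subset_ball' (by linarith [hq₀ i])
  have hcard := card_mul_pow_finrank_le_of_pairwise_disjoint_ball_subset hr.le (by positivity)
    hdisjq hsub
  rw [Fintype.card_fin, finrank_euclideanSpace_fin, mul_pow] at hcard
  exact le_of_mul_le_mul_right hcard (by positivity)
end

section
/- For distance-2 coloring in (r,s)-civilized graphs, the associated conflict graph has inductive independence number at most (4r/s + 2)², with respect to any ordering of the vertices. Precisely: let G be an (r,s)-civilized graph, let v be a vertex, and let M be a set of vertices such that every u ∈ M is in conflict with v and no two distinct vertices of M are in conflict with each other. Then |M| ≤ (4r/s + 2)². -/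
open Finset

/-- Conflict for distance-2 coloring in a graph `G`: graph distance at most 2,
i.e. the two distinct vertices are adjacent or have a common neighbor. -/
def GraphConflict {n : ℕ} (G : SimpleGraph (Fin n)) (u v : Fin n) : Prop :=
  u ≠ v ∧ (G.Adj u v ∨ ∃ z, G.Adj u z ∧ G.Adj z v)

/-!
Every vertex in conflict with `v` lies within distance `2r` of `p v`, and distinct vertices are
`s`-separated, so the open balls of radius `s/2` around the points of `M` are pairwise disjoint
and lie in the ball of radius `2r + s/2` around `p v`. Comparing areas gives
`|M| (s/2)² ≤ (2r + s/2)²`, i.e. `|M| ≤ (4r/s + 1)²`.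
-/

theorem GraphConflict.dist_le_two_mul {n : ℕ} {X : Type*} [PseudoMetricSpace X]
    {G : SimpleGraph (Fin n)} {p : Fin n → X} {r : ℝ}
    (hedge : ∀ u v, G.Adj u v → dist (p u) (p v) ≤ r) {u v : Fin n}
    (h : GraphConflict G u v) : dist (p u) (p v) ≤ 2 * r := by
  obtain ⟨-, hadj | ⟨z, huz, hzv⟩⟩ := h
  · linarith [hedge u v hadj, dist_nonneg (x := p u) (y := p v)]
  · calc dist (p u) (p v) ≤ dist (p u) (p z) + dist (p z) (p v) := dist_triangle _ _ _
      _ ≤ 2 * r := by linarith [hedge u z huz, hedge z v hzv]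

section Packing

open MeasureTheory Metric Module

variable {E : Type*} [NormedAddCommGroup E] [NormedSpace ℝ E] [MeasurableSpace E] [BorelSpace E]
  [FiniteDimensional ℝ E]

theorem card_mul_pow_le_of_separated (μ : Measure E) [μ.IsAddHaarMeasure] {ι : Type*}
    (x : ι → E) (S : Finset ι) (c : E) {ρ R : ℝ} (hρ : 0 < ρ) (hR : 0 ≤ R)
    (hsep : ∀ i ∈ S, ∀ j ∈ S, i ≠ j → 2 * ρ ≤ dist (x i) (x j))
    (hclose : ∀ i ∈ S, dist (x i) c ≤ R) :
    (S.card : ℝ) * ρ ^ finrank ℝ E ≤ (R + ρ) ^ finrank ℝ E := by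
  have hdisj : (S : Set ι).PairwiseDisjoint fun i => ball (x i) ρ := fun i hi j hj hij =>
    ball_disjoint_ball (by linarith [hsep i hi j hj hij])
  have hsub : (⋃ i ∈ S, ball (x i) ρ) ⊆ ball c (R + ρ) := by
    simp only [Set.iUnion_subset_iff]
    intro i hi
    exact ball_subset_ball' (by linarith [hclose i hi])
  have hvol : (S.card : ENNReal) * (ENNReal.ofReal (ρ ^ finrank ℝ E) * μ (ball 0 1))
      ≤ ENNReal.ofReal ((R + ρ) ^ finrank ℝ E) * μ (ball 0 1) :=
    calc (S.card : ENNReal) * (ENNReal.ofReal (ρ ^ finrank ℝ E) * μ (ball 0 1))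
        = ∑ i ∈ S, μ (ball (x i) ρ) := by
          simp only [Measure.addHaar_ball_of_pos μ _ hρ, sum_const, nsmul_eq_mul]
      _ = μ (⋃ i ∈ S, ball (x i) ρ) :=
          (measure_biUnion_finset hdisj fun i _ => measurableSet_ball).symm
      _ ≤ μ (ball c (R + ρ)) := measure_mono hsub
      _ = ENNReal.ofReal ((R + ρ) ^ finrank ℝ E) * μ (ball 0 1) :=
          Measure.addHaar_ball_of_pos μ c (by linarith)
  rw [← mul_assoc, ENNReal.mul_le_mul_iff_left (measure_ball_pos μ 0 one_pos).ne'
    measure_ball_lt_top.ne, ← ENNReal.ofReal_natCast, ← ENNReal.ofReal_mul (by positivity),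
    ENNReal.ofReal_le_ofReal_iff (by positivity)] at hvol
  exact hvol

end Packing

theorem civilized_distance2_inductive_independence_general {n : ℕ} (r s : ℝ)
    (hs : 0 < s) (hsr : s ≤ r)
    (G : SimpleGraph (Fin n)) (p : Fin n → EuclideanSpace ℝ (Fin 2))
    (hedge : ∀ u v, G.Adj u v → dist (p u) (p v) ≤ r)
    (hsep : ∀ u v : Fin n, u ≠ v → s ≤ dist (p u) (p v))
    (v : Fin n) (M : Finset (Fin n))
    (hconf : ∀ u ∈ M, GraphConflict G u v) :
    (M.card : ℝ) ≤ (4 * r / s + 2) ^ 2 := by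
  have hr : 0 < r := hs.trans_le hsr
  have hpack := card_mul_pow_le_of_separated MeasureTheory.volume p M (p v)
    (by linarith : 0 < s / 2) (by positivity : 0 ≤ 2 * r)
    (fun u _ u' _ huu' => by linarith [hsep u u' huu'])
    (fun u hu => (hconf u hu).dist_le_two_mul hedge)
  rw [finrank_euclideanSpace_fin] at hpack
  calc (M.card : ℝ) ≤ (2 * r + s / 2) ^ 2 / (s / 2) ^ 2 := by
        rwa [le_div_iff₀ (by positivity)]
    _ = (4 * r / s + 1) ^ 2 := by
        field_simp
        ring
    _ ≤ (4 * r / s + 2) ^ 2 := by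
        gcongr
        norm_num

/-- for distance-2 coloring in `(r,s)`-civilized graphs the
associated conflict graph has inductive independence number at most
`(4r/s + 2)²` (with respect to any ordering of the vertices). -/
theorem civilized_distance2_inductive_independence {n : ℕ} (r s : ℝ)
    (hs : 0 < s) (hsr : s ≤ r)
    (G : SimpleGraph (Fin n)) (p : Fin n → EuclideanSpace ℝ (Fin 2))
    (hedge : ∀ u v, G.Adj u v → dist (p u) (p v) ≤ r)
    (hsep : ∀ u v : Fin n, u ≠ v → s ≤ dist (p u) (p v))
    (v : Fin n) (M : Finset (Fin n))
    (hconf : ∀ u ∈ M, GraphConflict G u v)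
    (hnc : ∀ u ∈ M, ∀ u' ∈ M, u ≠ u' → ¬ GraphConflict G u u') :
    (M.card : ℝ) ≤ (4 * r / s + 2) ^ 2 :=
  civilized_distance2_inductive_independence_general r s hs hsr G p hedge hsep v M hconf
end

section
/- The interference constraints of the physical (SINR) model with fixed transmission powers can be represented exactly by an edge-weighted conflict graph: there exists ε > 0 such that, defining edge weights w(ℓ',ℓ) = min{ 1, (β/(1+ε))·(p_{ℓ'}/d(s_{ℓ'},r_ℓ)^α) / ( p_ℓ/d(s_ℓ,r_ℓ)^α − (β/(1+ε))·ν ) } for ℓ' ≠ ℓ and w(ℓ,ℓ) = 0, the following holds for every subset M of the links: M is SINR-feasible if and only if for every ℓ ∈ M, ∑_{ℓ' ∈ M, ℓ' ≠ ℓ} w(ℓ',ℓ) < 1 (i.e. M is an independent set of the edge-weighted conflict graph). -/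
/-! Only finitely many pairs `(M, ℓ)` exist, so the SINR constraints that hold do so with a common
multiplicative slack `1 + ε` and those that fail still fail after relaxing by it. The weights are
then chosen so that the conflict-graph sum at `ℓ` is below `1` exactly when the constraint with
threshold `β / (1 + ε)` holds strictly; the cap `min 1` is harmless because a sum of nonnegative
terms below `1` has no term reaching `1`. -/

open Finset Filter Topology

theorem exists_pos_forall_le_iff_lt_one_add_mul {κ : Type*} [Finite κ] (x y : κ → ℝ)
    (hy : ∀ q, 0 < y q) : ∃ ε > 0, ∀ q, x q ≤ y q ↔ x q < (1 + ε) * y q := by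
  have hslack : ∀ q, ∀ᶠ ε in 𝓝[>] (0 : ℝ), (x q ≤ y q ↔ x q < (1 + ε) * y q) := by
    intro q
    by_cases hxy : x q ≤ y q
    · filter_upwards [self_mem_nhdsWithin] with ε (hε : 0 < ε)
      have : y q < (1 + ε) * y q := by nlinarith [hy q]
      exact iff_of_true hxy (hxy.trans_lt this)
    · have hlim : Tendsto (fun ε : ℝ => (1 + ε) * y q) (𝓝[>] 0) (𝓝 (y q)) := by
        apply tendsto_nhdsWithin_of_tendsto_nhds
        exact (((continuous_const.add continuous_id).mul continuous_const :
          Continuous fun ε : ℝ => (1 + ε) * y q).tendsto' 0 (y q) (by simp))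
      filter_upwards [hlim.eventually_lt_const (not_le.mp hxy)] with ε hε
      exact iff_of_false hxy (not_lt.mpr hε.le)
  have hpos : ∀ᶠ ε in 𝓝[>] (0 : ℝ), 0 < ε := self_mem_nhdsWithin
  exact (hpos.and (eventually_all.mpr hslack)).exists

theorem Finset.sum_min_one_lt_one_iff {ι : Type*} {s : Finset ι} {x : ι → ℝ}
    (hx : ∀ i ∈ s, 0 ≤ x i) : ∑ i ∈ s, min 1 (x i) < 1 ↔ ∑ i ∈ s, x i < 1 := by
  refine ⟨fun h => ?_, fun h => (sum_le_sum fun i _ => min_le_right _ _).trans_lt h⟩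
  have hmin : ∀ i ∈ s, min 1 (x i) = x i := by
    intro i hi
    have hle : min 1 (x i) ≤ ∑ j ∈ s, min 1 (x j) :=
      single_le_sum (fun j hj => le_min zero_le_one (hx j hj)) hi
    have hxi : x i < 1 := by simpa using min_lt_iff.mp (hle.trans_lt h)
    exact min_eq_right hxi.le
  rwa [sum_congr rfl hmin] at h

theorem Finset.sum_min_one_mul_div_lt_one_iff {ι : Type*} {s : Finset ι} {g : ι → ℝ}
    {b ν S : ℝ} (hg : ∀ i ∈ s, 0 ≤ g i) (hb : 0 ≤ b) (hνS : b * ν < S) :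
    ∑ i ∈ s, min 1 (b * g i / (S - b * ν)) < 1 ↔ b * (∑ i ∈ s, g i + ν) < S := by
  have hD : 0 < S - b * ν := sub_pos.mpr hνS
  rw [sum_min_one_lt_one_iff fun i hi => div_nonneg (mul_nonneg hb (hg i hi)) hD.le,
    ← sum_div, ← mul_sum, div_lt_one hD, mul_add, lt_sub_iff_add_lt]

theorem exists_conflict_graph_weights {ι : Type*} [Fintype ι] [DecidableEq ι]
    (S : ι → ℝ) (G : ι → ι → ℝ) (β ν : ℝ) (hβ : 0 < β) (hν : 0 ≤ ν)
    (hG : ∀ ℓ' ℓ, 0 ≤ G ℓ' ℓ) (hS : ∀ ℓ, β * ν < S ℓ) :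
    ∃ ε > 0, ∀ M : Finset ι,
      (∀ ℓ ∈ M, β * (∑ ℓ' ∈ M.erase ℓ, G ℓ' ℓ + ν) ≤ S ℓ) ↔
        ∀ ℓ ∈ M, ∑ ℓ' ∈ M.erase ℓ,
          min 1 (β / (1 + ε) * G ℓ' ℓ / (S ℓ - β / (1 + ε) * ν)) < 1 := by
  have hSpos : ∀ ℓ, 0 < S ℓ := fun ℓ => (mul_nonneg hβ.le hν).trans_lt (hS ℓ)
  obtain ⟨ε, hε, hslack⟩ := exists_pos_forall_le_iff_lt_one_add_mul
    (fun q : Finset ι × ι => β * (∑ ℓ' ∈ q.1.erase q.2, G ℓ' q.2 + ν)) (fun q => S q.2)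
    (fun q => hSpos q.2)
  have h1ε : 0 < 1 + ε := by linarith
  have hνS : ∀ ℓ, β / (1 + ε) * ν < S ℓ := fun ℓ =>
    (mul_le_mul_of_nonneg_right (div_le_self hβ.le (by linarith)) hν).trans_lt (hS ℓ)
  refine ⟨ε, hε, fun M => forall₂_congr fun ℓ _ => ?_⟩
  rw [sum_min_one_mul_div_lt_one_iff (fun ℓ' _ => hG ℓ' ℓ) (div_nonneg hβ.le h1ε.le) (hνS ℓ),
    div_mul_eq_mul_div, div_lt_iff₀' h1ε]
  exact hslack (M, ℓ)

theorem physical_model_conflict_graph_representation_general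
    {X : Type*} [MetricSpace X] {m : ℕ}
    (s r : Fin m → X) (p : Fin m → ℝ) (α β ν : ℝ)
    (hβ : 0 < β) (hν : 0 ≤ ν)
    (hp : ∀ ℓ, 0 < p ℓ)
    (hnoise : ∀ ℓ, β * ν < p ℓ / dist (s ℓ) (r ℓ) ^ α) :
    ∃ ε : ℝ, 0 < ε ∧
      ∀ M : Finset (Fin m),
        (∀ ℓ ∈ M,
            β * ((∑ ℓ' ∈ M.erase ℓ, p ℓ' / dist (s ℓ') (r ℓ) ^ α) + ν)
              ≤ p ℓ / dist (s ℓ) (r ℓ) ^ α)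
        ↔ (∀ ℓ ∈ M,
            ∑ ℓ' ∈ M.erase ℓ,
              min 1 ((β / (1 + ε)) * (p ℓ' / dist (s ℓ') (r ℓ) ^ α)
                / (p ℓ / dist (s ℓ) (r ℓ) ^ α - (β / (1 + ε)) * ν)) < 1) :=
  exists_conflict_graph_weights (fun ℓ => p ℓ / dist (s ℓ) (r ℓ) ^ α)
    (fun ℓ' ℓ => p ℓ' / dist (s ℓ') (r ℓ) ^ α) β ν hβ hν
    (fun ℓ' _ => div_nonneg (hp ℓ').le (Real.rpow_nonneg dist_nonneg α)) hnoise

/-- the SINR constraints of the physical model with fixed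
transmission powers can be represented exactly by an edge-weighted conflict
graph: there is an `ε > 0` such that a set `M` of links is SINR-feasible iff
it is an independent set of the conflict graph with weights
`w(ℓ',ℓ) = min{1, (β/(1+ε))·(p ℓ' / d(s ℓ', r ℓ)^α) /
(p ℓ / d(s ℓ, r ℓ)^α − (β/(1+ε))·ν)}`. -/
theorem physical_model_conflict_graph_representation
    {X : Type*} [MetricSpace X] {m : ℕ}
    (s r : Fin m → X) (p : Fin m → ℝ) (α β ν : ℝ)
    (hα : 0 < α) (hβ : 0 < β) (hν : 0 ≤ ν)
    (hd : ∀ ℓ, 0 < dist (s ℓ) (r ℓ))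
    (hd' : ∀ ℓ ℓ' : Fin m, ℓ ≠ ℓ' → 0 < dist (s ℓ') (r ℓ))
    (hp : ∀ ℓ, 0 < p ℓ)
    (hnoise : ∀ ℓ, β * ν < p ℓ / dist (s ℓ) (r ℓ) ^ α) :
    ∃ ε : ℝ, 0 < ε ∧
      ∀ M : Finset (Fin m),
        (∀ ℓ ∈ M,
            β * ((∑ ℓ' ∈ M.erase ℓ, p ℓ' / dist (s ℓ') (r ℓ) ^ α) + ν)
              ≤ p ℓ / dist (s ℓ) (r ℓ) ^ α)
        ↔ (∀ ℓ ∈ M,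
            ∑ ℓ' ∈ M.erase ℓ,
              min 1 ((β / (1 + ε)) * (p ℓ' / dist (s ℓ') (r ℓ) ^ α)
                / (p ℓ / dist (s ℓ) (r ℓ) ^ α - (β / (1 + ε)) * ν)) < 1) :=
  physical_model_conflict_graph_representation_general s r p α β ν hβ hν hp hnoise
end

section
/- Consider the combinatorial auction problem with asymmetric channels, where each channel j ∈ [k] has its own conflict graph G_j = (V, E_j), all G_j having inductive independence number at most ρ ≥ 1 with respect to a common ordering π. Let x be a fractional LP solution of the asymmetric LP with value b*. Then there exists a feasible allocation S with b(S) ≥ b*/(4·k·ρ). (This is the existence form of the O(k·ρ)-approximation guarantee of the adapted randomized rounding algorithm for asymmetric channels.) -/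
open Finset

/-- `x` is a fractional solution of the asymmetric-channels LP, where channel
`j` has conflict graph `G j`. -/
def AsymIsLPSol {n k : ℕ} (G : Fin k → SimpleGraph (Fin n))
    [∀ j, DecidableRel (G j).Adj] (π : Equiv.Perm (Fin n)) (ρ : ℝ)
    (x : Fin n → Finset (Fin k) → ℝ) : Prop :=
  (∀ v T, 0 ≤ x v T) ∧
  (∀ (v : Fin n) (j : Fin k),
      ∑ u ∈ BackNbhd (G j) π v,
        ∑ T ∈ univ.filter (fun T : Finset (Fin k) => j ∈ T), x u T ≤ ρ) ∧
  (∀ v : Fin n, ∑ T : Finset (Fin k), x v T ≤ 1)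

/-- `S` is feasible for asymmetric channels: for each channel `j`, the set of
vertices assigned channel `j` is an independent set of `G j`. -/
def AsymFeasibleAlloc {n k : ℕ} (G : Fin k → SimpleGraph (Fin n))
    (S : Fin n → Finset (Fin k)) : Prop :=
  ∀ (j : Fin k) (u v : Fin n), u ≠ v → j ∈ S u → j ∈ S v → ¬ (G j).Adj u v

/-!
Randomized rounding with `c = 2kρ`: every vertex `v` independently picks `T` tentatively with
probability `x v T / c`, and keeps it unless some backward neighbour of `v` in `G j`, `j ∈ T`,
tentatively picked channel `j`; the result is feasible by construction. By independence and the
LP constraint, the expected number of such conflicts of `v`, given its choice `T`, is at most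
`|T| ρ / c ≤ 1/2`, so the expected value of `v` is at least `∑ T, b v T x v T / (2c)`. Some outcome
is at least the expectation.
-/

section ProductWeights

variable {ι β : Type*} [Fintype ι] [DecidableEq ι] [Fintype β] (w : ι → β → ℝ)

theorem sum_pi_prod_mul_prod (g : ι → β → ℝ) :
    ∑ ω : ι → β, (∏ i, w i (ω i)) * ∏ i, g i (ω i) = ∏ i, ∑ t, w i t * g i t := by
  simp_rw [← prod_mul_distrib]
  exact (Fintype.prod_sum fun i t => w i t * g i t).symm

variable {w}

theorem sum_pi_prod_mul_apply (hw : ∀ i, ∑ t, w i t = 1) (v : ι) (g : β → ℝ) :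
    ∑ ω : ι → β, (∏ i, w i (ω i)) * g (ω v) = ∑ t, w v t * g t := by
  have hfactor : ∀ i, ∑ t, w i t * (if i = v then g t else 1)
      = if i = v then ∑ t, w v t * g t else 1 := by
    intro i
    split_ifs with hi
    · rw [hi]
    · simp only [mul_one, hw]
  have h := sum_pi_prod_mul_prod w fun i t => if i = v then g t else 1
  simpa only [Fintype.prod_ite_eq', hfactor] using h

theorem sum_pi_prod_mul_apply_mul_apply (hw : ∀ i, ∑ t, w i t = 1) {u v : ι} (huv : u ≠ v)
    (f g : β → ℝ) :
    ∑ ω : ι → β, (∏ i, w i (ω i)) * (f (ω u) * g (ω v))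
      = (∑ t, w u t * f t) * ∑ t, w v t * g t := by
  have hfactor : ∀ i, ∑ t, w i t * ((if i = u then f t else 1) * (if i = v then g t else 1))
      = (if i = u then ∑ t, w u t * f t else 1) * (if i = v then ∑ t, w v t * g t else 1) := by
    intro i
    by_cases hiu : i = u
    · subst hiu; simp [huv]
    · by_cases hiv : i = v
      · subst hiv; simp [hiu]
      · simp [hiu, hiv, hw]
  have h := sum_pi_prod_mul_prod w
    fun i t => (if i = u then f t else 1) * (if i = v then g t else 1)
  simpa only [prod_mul_distrib, Fintype.prod_ite_eq', hfactor] using h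

end ProductWeights

theorem exists_le_of_le_sum_mul {α : Type*} [Fintype α] [Nonempty α] {P F : α → ℝ} {a : ℝ}
    (hP0 : ∀ ω, 0 ≤ P ω) (hP1 : ∑ ω, P ω = 1) (h : a ≤ ∑ ω, P ω * F ω) : ∃ ω, a ≤ F ω := by
  obtain ⟨ω₀, hω₀⟩ := Finite.exists_max F
  refine ⟨ω₀, h.trans ?_⟩
  calc ∑ ω, P ω * F ω ≤ ∑ ω, P ω * F ω₀ :=
        sum_le_sum fun ω _ => mul_le_mul_of_nonneg_left (hω₀ ω) (hP0 ω)
    _ = F ω₀ := by rw [← sum_mul, hP1, one_mul]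

section ScaledWeight

variable {β : Type*} [Fintype β] [DecidableEq β] (p : β → ℝ) (c : ℝ) (t₀ : β)

noncomputable def scaledWeight (t : β) : ℝ :=
  p t / c + if t = t₀ then 1 - (∑ s, p s) / c else 0

theorem sum_scaledWeight : ∑ t, scaledWeight p c t₀ t = 1 := by
  simp only [scaledWeight, sum_add_distrib, ← sum_div, sum_ite_eq', mem_univ, if_true]
  ring

theorem sum_scaledWeight_mul {g : β → ℝ} (hg : g t₀ = 0) :
    ∑ t, scaledWeight p c t₀ t * g t = (∑ t, p t * g t) / c := by
  simp only [scaledWeight, add_mul, sum_add_distrib, ite_mul, zero_mul, sum_ite_eq', mem_univ,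
    if_true, hg, mul_zero, add_zero, sum_div]
  exact sum_congr rfl fun t _ => div_mul_eq_mul_div _ _ _

variable {p c}

theorem scaledWeight_nonneg (hp : ∀ t, 0 ≤ p t) (hpc : ∑ t, p t ≤ c) (t : β) :
    0 ≤ scaledWeight p c t₀ t := by
  have hc : 0 ≤ c := (sum_nonneg fun t _ => hp t).trans hpc
  have hle : (∑ s, p s) / c ≤ 1 := div_le_one_of_le₀ hpc hc
  unfold scaledWeight
  split_ifs
  · linarith [div_nonneg (hp t) hc]
  · simpa using div_nonneg (hp t) hc

end ScaledWeight

section Rounding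

variable {n k : ℕ} (G : Fin k → SimpleGraph (Fin n)) [∀ j, DecidableRel (G j).Adj]
  (π : Equiv.Perm (Fin n))

/-- `ω` is the tentative choice, `ω v = ∅` meaning that `v` picked nothing. -/
def roundAlloc (ω : Fin n → Finset (Fin k)) (v : Fin n) : Finset (Fin k) :=
  if ∀ j ∈ ω v, ∀ u ∈ BackNbhd (G j) π v, j ∉ ω u then ω v else ∅

theorem roundAlloc_feasible (ω : Fin n → Finset (Fin k)) :
    AsymFeasibleAlloc G (roundAlloc G π ω) := by
  have hback : ∀ {j u v}, π u < π v → (G j).Adj u v → j ∈ roundAlloc G π ω u →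
      j ∉ roundAlloc G π ω v := by
    intro j u v hlt hadj hju hjv
    have hu : j ∈ ω u := by
      unfold roundAlloc at hju; split_ifs at hju
      · exact hju
      · simp at hju
    unfold roundAlloc at hjv
    split_ifs at hjv with hkeep
    · exact hkeep j hjv u (by simp [BackNbhd, hadj, hlt]) hu
    · simp at hjv
  intro j u v huv hju hjv hadj
  rcases lt_trichotomy (π u) (π v) with h | h | h
  · exact hback h hadj hju hjv
  · exact huv (π.injective h)
  · exact hback h hadj.symm hjv hju

def conflictPenalty (b : Finset (Fin k) → ℝ) (ω : Fin n → Finset (Fin k)) (v : Fin n) : ℝ :=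
  ∑ j, ∑ u ∈ BackNbhd (G j) π v, (if j ∈ ω v then b (ω v) else 0) * (if j ∈ ω u then 1 else 0)

theorem sub_conflictPenalty_le_roundAlloc {b : Finset (Fin k) → ℝ} (hb : ∀ T, 0 ≤ b T)
    (hb0 : b ∅ = 0) (ω : Fin n → Finset (Fin k)) (v : Fin n) :
    b (ω v) - conflictPenalty G π b ω v ≤ b (roundAlloc G π ω v) := by
  have hterm : ∀ j u, 0 ≤ (if j ∈ ω v then b (ω v) else 0) * (if j ∈ ω u then (1 : ℝ) else 0) :=
    fun j u => mul_nonneg (by split_ifs <;> simp [hb]) (by split_ifs <;> simp)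
  have hnonneg : 0 ≤ conflictPenalty G π b ω v :=
    sum_nonneg fun j _ => sum_nonneg fun u _ => hterm j u
  unfold roundAlloc
  split_ifs with hkeep
  · linarith
  · push Not at hkeep
    obtain ⟨j, hj, u, hu, hju⟩ := hkeep
    have hconflict : b (ω v) ≤ conflictPenalty G π b ω v := by
      unfold conflictPenalty
      refine le_of_eq_of_le ?_ ((single_le_sum (fun u _ => hterm j u) hu).trans
        (single_le_sum (fun j _ => sum_nonneg fun u (_ : u ∈ BackNbhd (G j) π v) => hterm j u)
          (mem_univ j)))
      simp [hj, hju]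
    rw [hb0]
    linarith

variable (x : Fin n → Finset (Fin k) → ℝ) (c : ℝ)

noncomputable def roundingProb (ω : Fin n → Finset (Fin k)) : ℝ :=
  ∏ v, scaledWeight (x v) c ∅ (ω v)

theorem sum_roundingProb : ∑ ω, roundingProb x c ω = 1 := by
  simp only [roundingProb]
  rw [← Fintype.prod_sum fun v T => scaledWeight (x v) c ∅ T]
  exact prod_eq_one fun v _ => sum_scaledWeight (x v) c ∅

variable {x c}

theorem roundingProb_nonneg (hx0 : ∀ v T, 0 ≤ x v T) (hxc : ∀ v, ∑ T, x v T ≤ c)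
    (ω : Fin n → Finset (Fin k)) : 0 ≤ roundingProb x c ω :=
  prod_nonneg fun v _ => scaledWeight_nonneg ∅ (hx0 v) (hxc v) (ω v)

theorem expected_tentative_value {b : Finset (Fin k) → ℝ} (hb0 : b ∅ = 0) (v : Fin n) :
    ∑ ω, roundingProb x c ω * b (ω v) = (∑ T, x v T * b T) / c := by
  rw [← sum_scaledWeight_mul (x v) c ∅ hb0]
  exact sum_pi_prod_mul_apply (fun v => sum_scaledWeight (x v) c ∅) v b

theorem expected_conflict {b : Finset (Fin k) → ℝ} (j : Fin k) {u v : Fin n}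
    (huv : u ≠ v) :
    ∑ ω, roundingProb x c ω *
        ((if j ∈ ω v then b (ω v) else 0) * (if j ∈ ω u then 1 else 0))
      = (∑ T, x v T * (if j ∈ T then b T else 0)) / c
          * ((∑ T ∈ univ.filter (fun T : Finset (Fin k) => j ∈ T), x u T) / c) := by
  have h := sum_pi_prod_mul_apply_mul_apply (fun v => sum_scaledWeight (x v) c ∅) huv.symm
    (fun T => if j ∈ T then b T else 0) (fun T => if j ∈ T then (1 : ℝ) else 0)
  rw [sum_scaledWeight_mul (x v) c ∅ (by simp), sum_scaledWeight_mul (x u) c ∅ (by simp)] at h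
  rw [sum_filter]
  simpa only [roundingProb, mul_ite, mul_one, mul_zero] using h

variable {ρ : ℝ}

theorem expected_conflicts_le (hx : AsymIsLPSol G π ρ x) (hc : 0 ≤ c)
    {b : Finset (Fin k) → ℝ} (hb : ∀ T, 0 ≤ b T) (v : Fin n) :
    ∑ ω, roundingProb x c ω * conflictPenalty G π b ω v ≤ k * ρ / c ^ 2 * ∑ T, x v T * b T := by
  obtain ⟨hx0, hback, -⟩ := hx
  have hne : ∀ {j u}, u ∈ BackNbhd (G j) π v → u ≠ v := by
    intro j u hu huv
    simp [BackNbhd, huv] at hu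
  calc ∑ ω, roundingProb x c ω * conflictPenalty G π b ω v
      = ∑ j, (∑ T, x v T * (if j ∈ T then b T else 0)) / c * ∑ u ∈ BackNbhd (G j) π v,
          (∑ T ∈ univ.filter (fun T : Finset (Fin k) => j ∈ T), x u T) / c := by
        simp_rw [conflictPenalty, mul_sum]
        rw [sum_comm]
        refine sum_congr rfl fun j _ => ?_
        rw [sum_comm]
        exact sum_congr rfl fun u hu => expected_conflict j (hne hu)
    _ ≤ ∑ _j : Fin k, (∑ T, x v T * b T) / c * (ρ / c) := by
        refine sum_le_sum fun j _ => ?_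
        have hA : ∑ T, x v T * (if j ∈ T then b T else 0) ≤ ∑ T, x v T * b T :=
          sum_le_sum fun T _ => mul_le_mul_of_nonneg_left
            (by split_ifs <;> simp [hb]) (hx0 v T)
        rw [← sum_div]
        exact mul_le_mul (div_le_div_of_nonneg_right hA hc)
          (div_le_div_of_nonneg_right (hback v j) hc)
          (div_nonneg (sum_nonneg fun u _ => sum_nonneg fun T _ => hx0 u T) hc)
          (div_nonneg (sum_nonneg fun T _ => mul_nonneg (hx0 v T) (hb T)) hc)
    _ = k * ρ / c ^ 2 * ∑ T, x v T * b T := by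
        rw [sum_const, card_univ, Fintype.card_fin, nsmul_eq_mul]
        ring

theorem le_expected_roundAlloc_value (hx : AsymIsLPSol G π ρ x) (hxc : ∀ v, ∑ T, x v T ≤ c)
    {b : Finset (Fin k) → ℝ} (hb : ∀ T, 0 ≤ b T) (hb0 : b ∅ = 0) (v : Fin n) :
    (1 - k * ρ / c) / c * ∑ T, x v T * b T
      ≤ ∑ ω, roundingProb x c ω * b (roundAlloc G π ω v) := by
  have hc : 0 ≤ c := (sum_nonneg fun T _ => hx.1 v T).trans (hxc v)
  calc (1 - k * ρ / c) / c * ∑ T, x v T * b T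
      = (∑ T, x v T * b T) / c - k * ρ / c ^ 2 * ∑ T, x v T * b T := by ring
    _ ≤ ∑ ω, roundingProb x c ω * b (ω v)
          - ∑ ω, roundingProb x c ω * conflictPenalty G π b ω v := by
        rw [expected_tentative_value hb0]
        exact sub_le_sub_left (expected_conflicts_le G π hx hc hb v) _
    _ = ∑ ω, roundingProb x c ω * (b (ω v) - conflictPenalty G π b ω v) := by
        simp only [mul_sub, sum_sub_distrib]
    _ ≤ ∑ ω, roundingProb x c ω * b (roundAlloc G π ω v) :=
        sum_le_sum fun ω _ => mul_le_mul_of_nonneg_left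
          (sub_conflictPenalty_le_roundAlloc G π hb hb0 ω v) (roundingProb_nonneg hx.1 hxc ω)

end Rounding

theorem exists_feasible_alloc_asymmetric_general {n k : ℕ} (hk : 1 ≤ k)
    (G : Fin k → SimpleGraph (Fin n)) [∀ j, DecidableRel (G j).Adj]
    (π : Equiv.Perm (Fin n)) (ρ : ℝ) (hρ : 1 ≤ ρ)
    (b : Fin n → Finset (Fin k) → ℝ) (hb : ∀ v T, 0 ≤ b v T)
    (hb0 : ∀ v, b v ∅ = 0)
    (x : Fin n → Finset (Fin k) → ℝ) (hx : AsymIsLPSol G π ρ x) :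
    ∃ S : Fin n → Finset (Fin k), AsymFeasibleAlloc G S ∧
      (∑ v : Fin n, ∑ T : Finset (Fin k), b v T * x v T) / (4 * k * ρ)
        ≤ ∑ v : Fin n, b v (S v) := by
  have hk' : (1 : ℝ) ≤ k := by exact_mod_cast hk
  have hc : 1 ≤ 2 * k * ρ := by nlinarith
  have hxc : ∀ v, ∑ T, x v T ≤ 2 * k * ρ := fun v => (hx.2.2 v).trans hc
  obtain ⟨ω, hω⟩ := exists_le_of_le_sum_mul (roundingProb_nonneg hx.1 hxc)
    (sum_roundingProb x _) (F := fun ω => ∑ v, b v (roundAlloc G π ω v)) <| calc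
      (∑ v, ∑ T, b v T * x v T) / (4 * k * ρ)
        = ∑ v, (1 - k * ρ / (2 * k * ρ)) / (2 * k * ρ) * ∑ T, x v T * b v T := by
          have hconst : (1 - k * ρ / (2 * k * ρ)) / (2 * k * ρ) = 1 / (4 * k * ρ) := by
            field_simp
            ring
          rw [hconst, ← mul_sum, one_div_mul_eq_div]
          simp_rw [mul_comm (b _ _)]
      _ ≤ ∑ v, ∑ ω, roundingProb x (2 * k * ρ) ω * b v (roundAlloc G π ω v) :=
          sum_le_sum fun v _ => le_expected_roundAlloc_value G π hx hxc (hb v) (hb0 v) v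
      _ = ∑ ω, roundingProb x (2 * k * ρ) ω * ∑ v, b v (roundAlloc G π ω v) := by
          rw [sum_comm]
          simp_rw [mul_sum]
  exact ⟨roundAlloc G π ω, roundAlloc_feasible G π ω, hω⟩

/-- rounding guarantee for asymmetric channels: there is a
feasible allocation with value at least `b* / (4 k ρ)`. -/
theorem exists_feasible_alloc_asymmetric {n k : ℕ} (hk : 1 ≤ k)
    (G : Fin k → SimpleGraph (Fin n)) [∀ j, DecidableRel (G j).Adj]
    (π : Equiv.Perm (Fin n)) (ρ : ℝ) (hρ : 1 ≤ ρ)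
    (hind : ∀ j : Fin k, IndIndepAtMost (G j) π ρ)
    (b : Fin n → Finset (Fin k) → ℝ) (hb : ∀ v T, 0 ≤ b v T)
    (hb0 : ∀ v, b v ∅ = 0)
    (x : Fin n → Finset (Fin k) → ℝ) (hx : AsymIsLPSol G π ρ x) :
    ∃ S : Fin n → Finset (Fin k), AsymFeasibleAlloc G S ∧
      (∑ v : Fin n, ∑ T : Finset (Fin k), b v T * x v T) / (4 * k * ρ)
        ≤ ∑ v : Fin n, b v (S v) :=
  exists_feasible_alloc_asymmetric_general hk G π ρ hρ b hb hb0 x hx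
end
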